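/- arXiv:2105.13579 — 7 statements merged into one kernel-verified Lean document; each statement's English description precedes it below -/
import Mathlib

section
/- Let n ≥ 3 and let X ∈ SDD_n^* with Tr(X) = 1. Then the Frobenius distance from X to the PSD cone is at most (n−2)/n: ‖X − P_{S^n_+}(X)‖_F ≤ (n−2)/n. -/
open Matrix BigOperators

/-- Frobenius norm of a real matrix. -/
noncomputable def frob {n : ℕ} (M : Matrix (Fin n) (Fin n) ℝ) : ℝ :=
  Real.sqrt (∑ i, ∑ j, (M i j) ^ 2)

/-- Frobenius distance from `X` to the PSD cone. -/
noncomputable def distPSD {n : ℕ} (X : Matrix (Fin n) (Fin n) ℝ) : ℝ :=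
  sInf {d : ℝ | ∃ Y : Matrix (Fin n) (Fin n) ℝ, Y.PosSemidef ∧ d = frob (X - Y)}

/-- Membership in `SDD_n^*`. -/
def SDDstar {n : ℕ} (X : Matrix (Fin n) (Fin n) ℝ) : Prop :=
  X.IsSymm ∧ (∀ i, 0 ≤ X i i) ∧ ∀ i j : Fin n, i < j → X i j ^ 2 ≤ X i i * X j j

/-- Membership in `DD_n^*`. -/
def DDstar {n : ℕ} (X : Matrix (Fin n) (Fin n) ℝ) : Prop :=
  X.IsSymm ∧ ∀ i j : Fin n, i ≤ j →
    0 ≤ X i i + X j j + 2 * X i j ∧ 0 ≤ X i i + X j j - 2 * X i j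

/-- Membership in the k-PSD closure `S^{n,k}`. -/
def kPSD {n : ℕ} (k : ℕ) (X : Matrix (Fin n) (Fin n) ℝ) : Prop :=
  X.IsSymm ∧ ∀ f : Fin k → Fin n, Function.Injective f → (X.submatrix f f).PosSemidef

/-- The matrix `G(a,b,n) = (a+b)I - a ee^T`. -/
noncomputable def gmat (n : ℕ) (a b : ℝ) : Matrix (Fin n) (Fin n) ℝ :=
  (a + b) • (1 : Matrix (Fin n) (Fin n) ℝ) - a • Matrix.of (fun _ _ => (1 : ℝ))

section Aux

variable {n : ℕ}

lemma sum_sq_eq_trace (M : Matrix (Fin n) (Fin n) ℝ) :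
    ∑ i, ∑ j, (M i j) ^ 2 = (Mᵀ * M).trace := by
  rw [Finset.sum_comm]
  simp [Matrix.trace, Matrix.diag, Matrix.mul_apply, sq]

lemma conj_trace (U : Matrix (Fin n) (Fin n) ℝ) (hU : Uᴴ * U = 1)
    (d : Fin n → ℝ) : (U * Matrix.diagonal d * Uᴴ).trace = ∑ i, d i := by
  rw [Matrix.trace_mul_cycle, hU, Matrix.one_mul, Matrix.trace_diagonal]

lemma conj_sum_sq (U : Matrix (Fin n) (Fin n) ℝ) (hU : Uᴴ * U = 1)
    (d : Fin n → ℝ) :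
    ∑ i, ∑ j, ((U * Matrix.diagonal d * Uᴴ) i j) ^ 2 = ∑ i, d i ^ 2 := by
  have hUt : Uᵀ * U = 1 := by
    rwa [Matrix.conjTranspose_eq_transpose_of_trivial] at hU
  have hsym : (U * Matrix.diagonal d * Uᴴ)ᵀ = U * Matrix.diagonal d * Uᴴ := by
    rw [Matrix.conjTranspose_eq_transpose_of_trivial]
    rw [Matrix.transpose_mul, Matrix.transpose_mul, Matrix.transpose_transpose,
      Matrix.diagonal_transpose, Matrix.mul_assoc]
  rw [sum_sq_eq_trace, hsym]
  have : (U * Matrix.diagonal d * Uᴴ) * (U * Matrix.diagonal d * Uᴴ)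
      = U * Matrix.diagonal (fun i => d i * d i) * Uᴴ := by
    rw [Matrix.conjTranspose_eq_transpose_of_trivial]
    have : (U * Matrix.diagonal d * Uᵀ) * (U * Matrix.diagonal d * Uᵀ)
        = U * Matrix.diagonal d * (Uᵀ * U) * Matrix.diagonal d * Uᵀ := by
      simp only [Matrix.mul_assoc]
    rw [this, hUt, Matrix.mul_one, Matrix.mul_assoc U, Matrix.diagonal_mul_diagonal,
      Matrix.mul_assoc]
  rw [this, conj_trace U hU]
  simp [sq]

end Aux

theorem distPSD_le_of_SDDstar (n : ℕ) (hn : 3 ≤ n) (X : Matrix (Fin n) (Fin n) ℝ)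
    (hX : SDDstar X) (htr : X.trace = 1) :
    distPSD X ≤ ((n : ℝ) - 2) / n := by
  obtain ⟨hsymm, hdiag, hoff⟩ := hX
  have hn3 : (3 : ℝ) ≤ (n : ℝ) := by exact_mod_cast hn
  have hnpos : (0 : ℝ) < n := by linarith
  have hherm : X.IsHermitian := by
    rwa [Matrix.IsHermitian, Matrix.conjTranspose_eq_transpose_of_trivial]
  set U : Matrix (Fin n) (Fin n) ℝ := (hherm.eigenvectorUnitary : Matrix (Fin n) (Fin n) ℝ)
    with hUdef
  have hU : Uᴴ * U = 1 := by
    rw [← Matrix.star_eq_conjTranspose]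
    exact (Matrix.mem_unitaryGroup_iff').mp hherm.eigenvectorUnitary.2
  set lam : Fin n → ℝ := hherm.eigenvalues with hlamdef
  have hspec : X = U * Matrix.diagonal lam * Uᴴ := by
    have h := hherm.spectral_theorem
    rwa [RCLike.ofReal_real_eq_id, Function.id_comp, Unitary.conjStarAlgAut_apply,
      Matrix.star_eq_conjTranspose] at h
  -- eigenvalue facts
  have hsumlam : ∑ i, lam i = 1 := by
    rw [← conj_trace U hU lam, ← hspec, htr]
  have hentry : ∀ i j, X i j ^ 2 ≤ X i i * X j j := by
    intro i j
    rcases lt_trichotomy i j with h | h | h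
    · exact hoff i j h
    · subst h; rw [sq]
    · have := hoff j i h
      rw [hsymm.apply i j] at this  -- X j i = X i j ... check direction
      linarith [this]
  have hsumsq : ∑ i, lam i ^ 2 ≤ 1 := by
    have h1 : ∑ i, lam i ^ 2 = ∑ i, ∑ j, (X i j) ^ 2 := by
      rw [hspec, conj_sum_sq U hU lam]
    have h2 : ∑ i, ∑ j, (X i j) ^ 2 ≤ ∑ i, ∑ j, X i i * X j j := by
      refine Finset.sum_le_sum fun i _ => Finset.sum_le_sum fun j _ => hentry i j
    have h3 : ∑ i, ∑ j, X i i * X j j = (∑ i, X i i) * (∑ j, X j j) := by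
      rw [Finset.sum_mul_sum]
    have h4 : (∑ i, X i i) = 1 := htr
    rw [h1]
    calc ∑ i, ∑ j, (X i j) ^ 2 ≤ ∑ i, ∑ j, X i i * X j j := h2
      _ = 1 := by rw [h3, h4, one_mul]
  -- projection matrix
  set p : Fin n → ℝ := fun i => max (lam i) 0 with hpdef
  set m : Fin n → ℝ := fun i => min (lam i) 0 with hmdef
  set Y : Matrix (Fin n) (Fin n) ℝ := U * Matrix.diagonal p * Uᴴ with hYdef
  have hYpsd : Y.PosSemidef := by
    refine Matrix.PosSemidef.mul_mul_conjTranspose_same ?_ U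
    exact Matrix.posSemidef_diagonal_iff.mpr fun i => le_max_right _ _
  have hXY : X - Y = U * Matrix.diagonal m * Uᴴ := by
    rw [hspec, hYdef, ← Matrix.sub_mul, ← Matrix.mul_sub, Matrix.diagonal_sub]
    congr 1
    congr 1
    ext i j
    by_cases hij : i = j
    · subst hij
      simp only [Matrix.diagonal_apply_eq]
      rcases le_total (lam i) 0 with h | h
      · simp [hpdef, hmdef, max_eq_right h, min_eq_left h]
      · simp [hpdef, hmdef, max_eq_left h, min_eq_right h]
    · rw [Matrix.diagonal_apply_ne _ hij, Matrix.diagonal_apply_ne _ hij]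
  have hfrob : frob (X - Y) = Real.sqrt (∑ i, m i ^ 2) := by
    rw [frob, hXY, conj_sum_sq U hU m]
  set t : ℝ := Real.sqrt (∑ i, m i ^ 2) with htdef
  have ht0 : 0 ≤ t := Real.sqrt_nonneg _
  have htsq : t ^ 2 = ∑ i, m i ^ 2 :=
    Real.sq_sqrt (Finset.sum_nonneg fun i _ => sq_nonneg _)
  -- distPSD ≤ frob (X - Y)
  have hle : distPSD X ≤ frob (X - Y) := by
    apply csInf_le
    · refine ⟨0, fun d hd => ?_⟩
      obtain ⟨Z, _, hdz⟩ := hd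
      rw [hdz]
      exact Real.sqrt_nonneg _
    · exact ⟨Y, hYpsd, rfl⟩
  rw [hfrob] at hle
  refine hle.trans ?_
  -- now show t ≤ (n-2)/n
  by_cases hneg : ∀ i, 0 ≤ lam i
  · have : ∀ i, m i = 0 := fun i => min_eq_right (hneg i)
    have ht : t = 0 := by
      rw [htdef]
      simp [this]
    rw [ht]
    apply div_nonneg <;> linarith
  · push_neg at hneg
    obtain ⟨i0, hi0⟩ := hneg
    classical
    set P : Finset (Fin n) := Finset.univ.filter (fun i => 0 ≤ lam i) with hPdef
    set Pc : Finset (Fin n) := Finset.univ.filter (fun i => ¬ 0 ≤ lam i) with hPcdef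
    have hsplit : ∀ f : Fin n → ℝ, ∑ i ∈ P, f i + ∑ i ∈ Pc, f i = ∑ i, f i := by
      intro f
      exact Finset.sum_filter_add_sum_filter_not _ _ f
    set s : ℝ := ∑ i ∈ Pc, (-lam i) with hsdef
    have hs0 : 0 ≤ s := Finset.sum_nonneg fun i hi => by
      have := (Finset.mem_filter.mp hi).2
      push_neg at this
      linarith
    have hsumP : ∑ i ∈ P, lam i = 1 + s := by
      have := hsplit lam
      rw [hsumlam] at this
      have h2 : ∑ i ∈ Pc, lam i = -s := by
        rw [hsdef, ← Finset.sum_neg_distrib]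
        ring_nf
      linarith [this, h2]
    have hmP : ∀ i ∈ P, m i = 0 := fun i hi =>
      min_eq_right (Finset.mem_filter.mp hi).2
    have hmPc : ∀ i ∈ Pc, m i = lam i := fun i hi => by
      have := (Finset.mem_filter.mp hi).2
      push_neg at this
      exact min_eq_left this.le
    have hmsq : ∑ i, m i ^ 2 = ∑ i ∈ Pc, lam i ^ 2 := by
      have h0 : ∑ i ∈ P, m i ^ 2 = 0 :=
        Finset.sum_eq_zero fun i hi => by rw [hmP i hi]; ring
      have h1 : ∑ i ∈ Pc, m i ^ 2 = ∑ i ∈ Pc, lam i ^ 2 :=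
        Finset.sum_congr rfl fun i hi => by rw [hmPc i hi]
      calc ∑ i, m i ^ 2 = ∑ i ∈ P, m i ^ 2 + ∑ i ∈ Pc, m i ^ 2 :=
            (hsplit fun i => m i ^ 2).symm
        _ = ∑ i ∈ Pc, lam i ^ 2 := by rw [h0, h1, zero_add]
    -- t ≤ s
    have hts : t ≤ s := by
      have h1 : ∑ i ∈ Pc, lam i ^ 2 ≤ s ^ 2 := by
        have : ∑ i ∈ Pc, lam i ^ 2 = ∑ i ∈ Pc, (-lam i) ^ 2 := by
          refine Finset.sum_congr rfl fun i _ => by ring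
        rw [this, hsdef]
        refine Finset.sum_sq_le_sq_sum_of_nonneg fun i hi => ?_
        have := (Finset.mem_filter.mp hi).2
        push_neg at this
        linarith
      rw [htdef, hmsq]
      calc Real.sqrt (∑ i ∈ Pc, lam i ^ 2) ≤ Real.sqrt (s ^ 2) := Real.sqrt_le_sqrt h1
        _ = s := Real.sqrt_sq hs0
    -- cardinality bound
    have hi0Pc : i0 ∈ Pc := Finset.mem_filter.mpr ⟨Finset.mem_univ _, not_le.mpr hi0⟩
    have hcard : (P.card : ℝ) ≤ (n : ℝ) - 1 := by
      have hsub : P ⊆ Finset.univ.erase i0 := by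
        intro i hi
        refine Finset.mem_erase.mpr ⟨?_, Finset.mem_univ _⟩
        rintro rfl
        exact absurd (Finset.mem_filter.mp hi).2 (not_le.mpr hi0)
      have := Finset.card_le_card hsub
      rw [Finset.card_erase_of_mem (Finset.mem_univ i0), Finset.card_univ,
        Fintype.card_fin] at this
      have hn1 : 1 ≤ n := by omega
      calc (P.card : ℝ) ≤ ((n - 1 : ℕ) : ℝ) := by exact_mod_cast this
        _ = (n : ℝ) - 1 := by
          rw [Nat.cast_sub hn1]; norm_num
    -- Cauchy-Schwarz
    have hCS : (∑ i ∈ P, lam i) ^ 2 ≤ (P.card : ℝ) * ∑ i ∈ P, lam i ^ 2 := by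
      exact_mod_cast sq_sum_le_card_mul_sum_sq (s := P) (f := lam)
    have hsumsqP : ∑ i ∈ P, lam i ^ 2 ≤ 1 - t ^ 2 := by
      have h1 : ∑ i ∈ P, lam i ^ 2 + ∑ i ∈ Pc, lam i ^ 2 = ∑ i, lam i ^ 2 :=
        hsplit fun i => lam i ^ 2
      rw [htsq, hmsq]
      linarith [hsumsq, h1]
    have hPsq0 : 0 ≤ ∑ i ∈ P, lam i ^ 2 :=
      Finset.sum_nonneg fun i _ => sq_nonneg _
    have hkey : (1 + s) ^ 2 ≤ ((n : ℝ) - 1) * (1 - t ^ 2) := by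
      calc (1 + s) ^ 2 = (∑ i ∈ P, lam i) ^ 2 := by rw [hsumP]
        _ ≤ (P.card : ℝ) * ∑ i ∈ P, lam i ^ 2 := hCS
        _ ≤ ((n : ℝ) - 1) * ∑ i ∈ P, lam i ^ 2 := by
            exact mul_le_mul_of_nonneg_right hcard hPsq0
        _ ≤ ((n : ℝ) - 1) * (1 - t ^ 2) := by
            exact mul_le_mul_of_nonneg_left hsumsqP (by linarith)
    have hkey2 : (1 + t) ^ 2 ≤ ((n : ℝ) - 1) * (1 - t ^ 2) := by
      have : (1 + t) ^ 2 ≤ (1 + s) ^ 2 := by nlinarith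
      linarith
    rw [le_div_iff₀ hnpos]
    nlinarith [hkey2, ht0, sq_nonneg (1 + t), mul_pos hnpos (by linarith : (0:ℝ) < 1 + t)]
end

section
/- Let n ≥ 3 and let X ∈ SDD_n^* with Tr(X) = 1. Define X̃ symmetric by X̃_{ii} = (2/n)X_{ii} and X̃_{ij} = (2/(n(n−1)))X_{ij} for i ≠ j. Then X̃ is positive semidefinite and ‖X − (n−1)X̃‖_F ≤ (n−2)/n. -/
open Matrix BigOperators

theorem SDDstar_tilde_bound (n : ℕ) (hn : 3 ≤ n) (X : Matrix (Fin n) (Fin n) ℝ)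
    (hX : SDDstar X) (htr : X.trace = 1)
    (Xt : Matrix (Fin n) (Fin n) ℝ)
    (hXt : ∀ i j : Fin n,
      Xt i j = if i = j then (2 / (n : ℝ)) * X i i else (2 / ((n : ℝ) * (n - 1))) * X i j) :
    Xt.PosSemidef ∧ frob (X - ((n : ℝ) - 1) • Xt) ≤ ((n : ℝ) - 2) / n := by
  have hn3 : (3 : ℝ) ≤ (n : ℝ) := by exact_mod_cast hn
  have hn0 : (n : ℝ) ≠ 0 := by linarith
  have hn1 : (n : ℝ) - 1 ≠ 0 := by linarith
  have hn2 : (0 : ℝ) ≤ (n : ℝ) - 2 := by linarith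
  have hkey : ∀ i j : Fin n, X i j ^ 2 ≤ X i i * X j j := by
    intro i j
    rcases lt_trichotomy i j with h | h | h
    · exact hX.2.2 i j h
    · subst h; rw [sq]
    · have h2 := hX.2.2 j i h
      rw [hX.1.apply i j] at h2
      rw [mul_comm]; exact h2
  constructor
  · constructor
    · ext i j
      simp only [Matrix.conjTranspose_apply, RCLike.star_def, starRingEnd_apply, star_trivial]
      rw [hXt, hXt, hX.1.apply i j]
      rcases eq_or_ne i j with h | h
      · subst h; simp
      · rw [if_neg h, if_neg (Ne.symm h)]
    · intro x
      have hq : (0:ℝ) ≤ ∑ i, x i * ∑ j, Xt i j * x j := by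
        have S1eq : ∀ i : Fin n, x i * ∑ j, Xt i j * x j
            = (2 / (n : ℝ)) * (X i i * x i ^ 2)
              + (2 / ((n : ℝ) * (n - 1))) * ∑ j, (if i = j then 0 else X i j * x i * x j) := by
          intro i
          rw [Finset.mul_sum, Finset.mul_sum]
          have : ∀ j : Fin n, x i * (Xt i j * x j)
              = (if i = j then (2 / (n : ℝ)) * (X i i * x i ^ 2) else 0)
                + (2 / ((n : ℝ) * (n - 1))) * (if i = j then 0 else X i j * x i * x j) := by
            intro j
            rw [hXt]
            rcases eq_or_ne i j with h | h
            · subst h; simp; ring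
            · simp [h]; ring
          simp_rw [this, Finset.sum_add_distrib, Finset.sum_ite_eq, Finset.mem_univ, if_true]
        rw [Finset.sum_congr rfl (fun i _ => S1eq i), Finset.sum_add_distrib,
          ← Finset.mul_sum, ← Finset.mul_sum]
        set S1 : ℝ := ∑ i, X i i * x i ^ 2 with hS1
        set S2 : ℝ := ∑ i, ∑ j, (if i = j then 0 else X i j * x i * x j) with hS2
        have key : (0:ℝ) ≤ ((n:ℝ) - 1) * S1 + S2 := by
          have : ((n:ℝ) - 1) * S1 + S2
              = ∑ i, ∑ j, (if i = j then (0:ℝ) else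
                  (X i i * x i ^ 2 + X j j * x j ^ 2) / 2 + X i j * x i * x j) := by
            have split : ∀ i j : Fin n, (if i = j then (0:ℝ) else
                  (X i i * x i ^ 2 + X j j * x j ^ 2) / 2 + X i j * x i * x j)
                = (X i i * x i ^ 2 / 2 - (if i = j then X i i * x i ^ 2 / 2 else 0))
                  + (X j j * x j ^ 2 / 2 - (if i = j then X j j * x j ^ 2 / 2 else 0))
                  + (if i = j then 0 else X i j * x i * x j) := by
              intro i j
              rcases eq_or_ne i j with h | h
              · subst h; simp
              · simp [h]; ring
            simp_rw [split, Finset.sum_add_distrib, Finset.sum_sub_distrib,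
              Finset.sum_ite_eq, Finset.mem_univ, if_true, Finset.sum_const,
              Finset.card_univ, Fintype.card_fin, nsmul_eq_mul]
            rw [← hS2, ← Finset.mul_sum, ← Finset.sum_div, ← hS1]
            ring
          rw [this]
          apply Finset.sum_nonneg; intro i _
          apply Finset.sum_nonneg; intro j _
          rcases eq_or_ne i j with h | h
          · simp [h]
          · rw [if_neg h]
            have ha : 0 ≤ X i i * x i ^ 2 := mul_nonneg (hX.2.1 i) (sq_nonneg _)
            have hb : 0 ≤ X j j * x j ^ 2 := mul_nonneg (hX.2.1 j) (sq_nonneg _)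
            have h1 : (X i j * x i * x j) ^ 2 ≤ (X i i * x i ^ 2) * (X j j * x j ^ 2) := by
              nlinarith [hkey i j, sq_nonneg (x i * x j)]
            nlinarith [sq_nonneg (X i i * x i ^ 2 - X j j * x j ^ 2),
              sq_nonneg (X i i * x i ^ 2 + X j j * x j ^ 2 + 2 * (X i j * x i * x j))]
        have heq : 2 / (n:ℝ) * S1 + 2 / ((n:ℝ) * (n - 1)) * S2
            = 2 / ((n:ℝ) * (n - 1)) * (((n:ℝ) - 1) * S1 + S2) := by
          field_simp
        rw [heq]
        exact mul_nonneg (le_of_lt (div_pos two_pos (by nlinarith))) key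
      simpa [Finsupp.sum_fintype, Finset.mul_sum, mul_assoc] using hq
  · have hdiag : ∑ i, X i i = 1 := by simpa [Matrix.trace, Matrix.diag] using htr
    have hfro : ∑ i, ∑ j, (X i j) ^ 2 ≤ 1 := by
      calc ∑ i, ∑ j, X i j ^ 2 ≤ ∑ i, ∑ j, X i i * X j j :=
            Finset.sum_le_sum (fun i _ => Finset.sum_le_sum (fun j _ => hkey i j))
        _ = (∑ i, X i i) * (∑ j, X j j) := (Finset.sum_mul_sum _ _ _ _).symm
        _ = 1 := by rw [hdiag]; ring
    have hent : ∀ i j, ((X - ((n:ℝ) - 1) • Xt) i j) ^ 2 = (((n:ℝ) - 2) / n) ^ 2 * X i j ^ 2 := by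
      intro i j
      have he : (X - ((n:ℝ) - 1) • Xt) i j = X i j - ((n:ℝ) - 1) * Xt i j := by
        simp [Matrix.sub_apply, Matrix.smul_apply]
      rw [he, hXt]
      rcases eq_or_ne i j with h | h
      · subst h; rw [if_pos rfl]; field_simp; ring
      · rw [if_neg h]; field_simp
    unfold frob
    have hsum : ∑ i, ∑ j, ((X - ((n:ℝ) - 1) • Xt) i j) ^ 2
        = (((n:ℝ) - 2) / n) ^ 2 * ∑ i, ∑ j, X i j ^ 2 := by
      simp_rw [hent, ← Finset.mul_sum]
    rw [hsum, Real.sqrt_mul (sq_nonneg _), Real.sqrt_sq (div_nonneg hn2 (by linarith))]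
    exact mul_le_of_le_one_right (div_nonneg hn2 (by linarith)) (Real.sqrt_le_one.mpr hfro)
end

section
/- For n ≥ 3, the matrix G = (2/n)I − (1/n)ee^T (i.e., G(a,b,n) with a = b = 1/n) belongs to SDD_n^*, has trace 1, is not positive semidefinite, and its Frobenius distance to the PSD cone equals (n−2)/n. -/
open Matrix BigOperators

lemma gmat_apply (n : ℕ) (i j : Fin n) :
    gmat n (1 / (n:ℝ)) (1 / (n:ℝ)) i j
      = (if i = j then 2 / (n:ℝ) else 0) - 1 / n := by
  simp only [gmat, Matrix.sub_apply, Matrix.smul_apply, Matrix.one_apply, Matrix.of_apply,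
    smul_eq_mul, mul_one]
  split <;> ring

lemma gmat_rowsum (n : ℕ) (hn : 3 ≤ n) (i : Fin n) :
    ∑ j, gmat n (1/(n:ℝ)) (1/(n:ℝ)) i j = 2/(n:ℝ) - 1 := by
  have hN : (0:ℝ) < n := by exact_mod_cast Nat.lt_of_lt_of_le (by norm_num) hn
  simp only [gmat_apply, Finset.sum_sub_distrib, Finset.sum_ite_eq, Finset.mem_univ, if_true,
    Finset.sum_const, Finset.card_univ, Fintype.card_fin, nsmul_eq_mul]
  field_simp

lemma gmat_total (n : ℕ) (hn : 3 ≤ n) :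
    ∑ i, ∑ j, gmat n (1/(n:ℝ)) (1/(n:ℝ)) i j = 2 - n := by
  have hN : (0:ℝ) < n := by exact_mod_cast Nat.lt_of_lt_of_le (by norm_num) hn
  rw [Finset.sum_congr rfl (fun i _ => gmat_rowsum n hn i)]
  simp only [Finset.sum_const, Finset.card_univ, Fintype.card_fin, nsmul_eq_mul]
  field_simp

theorem gmat_lower_bound_witness (n : ℕ) (hn : 3 ≤ n) :
    SDDstar (gmat n (1 / (n : ℝ)) (1 / (n : ℝ))) ∧
    (gmat n (1 / (n : ℝ)) (1 / (n : ℝ))).trace = 1 ∧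
    ¬ (gmat n (1 / (n : ℝ)) (1 / (n : ℝ))).PosSemidef ∧
    distPSD (gmat n (1 / (n : ℝ)) (1 / (n : ℝ))) = ((n : ℝ) - 2) / n := by
  have hN : (0:ℝ) < n := by exact_mod_cast Nat.lt_of_lt_of_le (by norm_num) hn
  have hN3 : (3:ℝ) ≤ n := by exact_mod_cast hn
  have hN0 : (n:ℝ) ≠ 0 := ne_of_gt hN
  set G := gmat n (1 / (n : ℝ)) (1 / (n : ℝ)) with hG
  refine ⟨⟨?_, ?_, ?_⟩, ?_, ?_, ?_⟩
  · -- IsSymm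
    ext i j
    show G j i = G i j
    rw [hG, gmat_apply, gmat_apply]
    by_cases h : i = j <;> simp [h, eq_comm]
  · -- diag nonneg
    intro i
    rw [hG, gmat_apply, if_pos rfl]
    have : 2/(n:ℝ) - 1/n = 1/n := by ring
    rw [this]; positivity
  · -- off-diagonal
    intro i j hij
    rw [hG, gmat_apply, gmat_apply, gmat_apply, if_neg (ne_of_lt hij), if_pos rfl, if_pos rfl]
    exact le_of_eq (by ring)
  · -- trace
    rw [hG, Matrix.trace]
    have : ∀ i : Fin n, (gmat n (1/(n:ℝ)) (1/(n:ℝ))).diag i = 1/(n:ℝ) := by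
      intro i
      rw [Matrix.diag_apply, gmat_apply, if_pos rfl]; ring
    rw [Finset.sum_congr rfl (fun i _ => this i)]
    simp only [Finset.sum_const, Finset.card_univ, Fintype.card_fin, nsmul_eq_mul]
    field_simp
  · -- not PSD
    intro h
    have h2 := h.dotProduct_mulVec_nonneg (fun _ => (1:ℝ))
    have heval : dotProduct (star (fun _ => (1:ℝ))) (G *ᵥ (fun _ => (1:ℝ)))
        = ∑ i, ∑ j, G i j := by
      simp [dotProduct, Matrix.mulVec]
    rw [heval, hG, gmat_total n hn] at h2
    linarith
  · -- distance
    set c : ℝ := ((n:ℝ) - 2) / (n:ℝ)^2 with hc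
    have hcnn : 0 ≤ c := div_nonneg (by linarith) (by positivity)
    set Y : Matrix (Fin n) (Fin n) ℝ := G + c • Matrix.of (fun _ _ => (1:ℝ)) with hY
    have hYapp : ∀ i j : Fin n, Y i j = (if i = j then 2/(n:ℝ) else 0) - 2/(n:ℝ)^2 := by
      intro i j
      rw [hY, Matrix.add_apply, Matrix.smul_apply, hG, gmat_apply]
      simp only [Matrix.of_apply, smul_eq_mul, mul_one, hc]
      by_cases h : i = j <;> simp [h] <;> field_simp <;> ring
    have hYpsd : Y.PosSemidef := by
      refine Matrix.PosSemidef.of_dotProduct_mulVec_nonneg ?_ ?_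
      · ext i j
        show Y j i = Y i j
        rw [hYapp, hYapp]
        by_cases h : i = j <;> simp [h, eq_comm]
      · intro x
        have hform : dotProduct (star x) (Y *ᵥ x) = ∑ i, x i * ∑ j, Y i j * x j := by
          simp [dotProduct, Matrix.mulVec]
        have hrow : ∀ i : Fin n, (∑ j, Y i j * x j)
            = (2/(n:ℝ)) * x i - (2/(n:ℝ)^2) * ∑ j, x j := by
          intro i
          simp only [hYapp, sub_mul, ite_mul, zero_mul, Finset.sum_sub_distrib,
            Finset.sum_ite_eq, Finset.mem_univ, if_true, ← Finset.mul_sum]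
        have heq : dotProduct (star x) (Y *ᵥ x)
            = (2/(n:ℝ)) * (∑ i, x i ^ 2) - (2/(n:ℝ)^2) * (∑ i, x i)^2 := by
          rw [hform]
          calc ∑ i, x i * ∑ j, Y i j * x j
              = ∑ i, ((2/(n:ℝ)) * x i ^ 2 - ((2/(n:ℝ)^2) * ∑ j, x j) * x i) := by
                refine Finset.sum_congr rfl fun i _ => ?_
                rw [hrow i]; ring
            _ = (2/(n:ℝ)) * (∑ i, x i ^ 2) - (2/(n:ℝ)^2) * (∑ i, x i)^2 := by
                rw [Finset.sum_sub_distrib]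
                simp only [← Finset.mul_sum]
                ring
        rw [heq]
        have hcs : (∑ i, x i)^2 ≤ (n:ℝ) * ∑ i, x i ^ 2 := by
          have := Finset.sum_mul_sq_le_sq_mul_sq Finset.univ (fun _ : Fin n => (1:ℝ)) x
          simpa [Finset.card_univ, mul_comm] using this
        have hsq : 0 ≤ ∑ i, x i ^ 2 := Finset.sum_nonneg (fun i _ => sq_nonneg _)
        have h2 : 0 < (n:ℝ)^2 := by positivity
        rw [sub_nonneg]
        rw [div_mul_eq_mul_div, div_mul_eq_mul_div, div_le_div_iff₀ h2 hN]
        nlinarith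
    have hfrob : frob (G - Y) = ((n:ℝ) - 2) / n := by
      have hA : ∀ i j : Fin n, (G - Y) i j = -c := by
        intro i j
        simp [hY, Matrix.sub_apply, Matrix.add_apply]
      unfold frob
      rw [Finset.sum_congr rfl (fun i _ => Finset.sum_congr rfl (fun j _ => by rw [hA i j]))]
      simp only [Finset.sum_const, Finset.card_univ, Fintype.card_fin, nsmul_eq_mul]
      have : (n:ℝ) * ((n:ℝ) * (-c)^2) = (((n:ℝ) - 2)/n)^2 := by
        rw [hc]; field_simp
      rw [this, Real.sqrt_sq (div_nonneg (by linarith) (le_of_lt hN))]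
    have hmem : ((n:ℝ) - 2) / n ∈
        {d : ℝ | ∃ Z : Matrix (Fin n) (Fin n) ℝ, Z.PosSemidef ∧ d = frob (G - Z)} :=
      ⟨Y, hYpsd, hfrob.symm⟩
    have hlb : ∀ d ∈ {d : ℝ | ∃ Z : Matrix (Fin n) (Fin n) ℝ, Z.PosSemidef ∧ d = frob (G - Z)},
        ((n:ℝ) - 2) / n ≤ d := by
      rintro d ⟨Z, hZ, rfl⟩
      set A := G - Z with hA
      set s : ℝ := ∑ i, ∑ j, A i j with hs
      have hZe : 0 ≤ ∑ i, ∑ j, Z i j := by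
        have h2 := hZ.dotProduct_mulVec_nonneg (fun _ => (1:ℝ))
        have heval : dotProduct (star (fun _ => (1:ℝ))) (Z *ᵥ (fun _ => (1:ℝ)))
            = ∑ i, ∑ j, Z i j := by
          simp [dotProduct, Matrix.mulVec]
        rwa [heval] at h2
      have hsle : s ≤ 2 - n := by
        have hseq : s = (2 - (n:ℝ)) - ∑ i, ∑ j, Z i j := by
          rw [hs]
          have h3 : ∀ i : Fin n, ∑ j, A i j = (∑ j, G i j) - ∑ j, Z i j := by
            intro i; rw [hA]; simp [Matrix.sub_apply, Finset.sum_sub_distrib]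
          rw [Finset.sum_congr rfl (fun i _ => h3 i), Finset.sum_sub_distrib, hG,
            gmat_total n hn]
        linarith
      have hcs : s^2 ≤ ((n:ℝ)^2) * ∑ i, ∑ j, (A i j)^2 := by
        have h1 := Finset.sum_mul_sq_le_sq_mul_sq Finset.univ
          (fun p : Fin n × Fin n => A p.1 p.2) (fun _ => (1:ℝ))
        simp only [mul_one, one_pow, Finset.sum_const, Finset.card_univ, nsmul_eq_mul] at h1
        rw [Fintype.sum_prod_type, Fintype.sum_prod_type] at h1
        calc s^2 ≤ (∑ i, ∑ j, (A i j)^2) * ((Fintype.card (Fin n × Fin n) : ℝ)) := h1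
          _ = ((n:ℝ)^2) * ∑ i, ∑ j, (A i j)^2 := by
              simp only [Fintype.card_prod, Fintype.card_fin, Nat.cast_mul]; ring
      have hsum : (((n:ℝ) - 2)/n)^2 ≤ ∑ i, ∑ j, (A i j)^2 := by
        have hs2 : ((n:ℝ) - 2)^2 ≤ s^2 := by nlinarith
        rw [div_pow, div_le_iff₀ (by positivity)]
        calc ((n:ℝ) - 2)^2 ≤ s^2 := hs2
          _ ≤ ((n:ℝ)^2) * ∑ i, ∑ j, (A i j)^2 := hcs
          _ = (∑ i, ∑ j, (A i j)^2) * (n:ℝ)^2 := by ring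
      unfold frob
      exact Real.le_sqrt_of_sq_le hsum
    rw [distPSD]
    exact le_antisymm (csInf_le ⟨((n:ℝ) - 2)/n, hlb⟩ hmem) (le_csInf ⟨_, hmem⟩ hlb)
end

section
/- For n ≥ 2, let X* be the symmetric matrix with X*_{nn} = 1, X*_{in} = X*_{ni} = a_i ∈ {1/2,−1/2} for i < n, and zeros elsewhere. Then the Frobenius distance from X* to the PSD cone equals (√n − 1)/2. -/
open Matrix BigOperators

/-- Auxiliary: a double sum of a product factors. -/
lemma dsum_factor {n : ℕ} (f g : Fin n → ℝ) (h : Fin n → Fin n → ℝ)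
    (hfg : ∀ i j, h i j = f i * g j) :
    ∑ i, ∑ j, h i j = (∑ i, f i) * (∑ j, g j) := by
  rw [Finset.sum_mul_sum]
  exact Finset.sum_congr rfl fun i _ => Finset.sum_congr rfl fun j _ => hfg i j

/-- Auxiliary: Cauchy-Schwarz for double sums. -/
lemma dCS {n : ℕ} (A B : Fin n → Fin n → ℝ) :
    (∑ i, ∑ j, A i j * B i j) ^ 2 ≤ (∑ i, ∑ j, (A i j) ^ 2) * (∑ i, ∑ j, (B i j) ^ 2) := by
  have h := Finset.sum_mul_sq_le_sq_mul_sq Finset.univ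
    (fun p : Fin n × Fin n => A p.1 p.2) (fun p : Fin n × Fin n => B p.1 p.2)
  simpa [Fintype.sum_prod_type] using h

set_option maxHeartbeats 1600000 in
theorem arrowhead_distPSD (n : ℕ) (hn : 2 ≤ n) (a : Fin n → ℝ)
    (ha : ∀ i, a i = 1 / 2 ∨ a i = -(1 / 2))
    (L : Fin n) (hL : (L : ℕ) = n - 1)
    (X : Matrix (Fin n) (Fin n) ℝ)
    (hXdef : ∀ i j : Fin n, X i j =
      if i = L ∧ j = L then 1
      else if j = L then a i
      else if i = L then a j
      else 0) :
    distPSD X = (Real.sqrt n - 1) / 2 := by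
  have hn0 : (0:ℝ) ≤ (n:ℝ) := by positivity
  set r := Real.sqrt (n:ℝ) with hrdef
  have hr2 : r * r = (n:ℝ) := Real.mul_self_sqrt hn0
  have hn1 : (1:ℝ) < (n:ℝ) := by exact_mod_cast lt_of_lt_of_le one_lt_two hn
  have hr1 : 1 < r := by nlinarith [Real.sqrt_nonneg (n:ℝ)]
  have hr0 : (0:ℝ) < r := lt_trans one_pos hr1
  have hnr : r < (n:ℝ) := by nlinarith
  have hnm : (0:ℝ) < (n:ℝ) - r := by linarith
  have hnp : (0:ℝ) < (n:ℝ) + r := by linarith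
  have hnm' : (n:ℝ) - r ≠ 0 := ne_of_gt hnm
  have hnp' : (n:ℝ) + r ≠ 0 := ne_of_gt hnp
  have ha2 : ∀ i, a i * a i = 1/4 := fun i => by
    rcases ha i with h | h <;> rw [h] <;> norm_num
  set u : Fin n → ℝ := fun i => if i = L then (1 - r)/2 else a i with hu
  set w : Fin n → ℝ := fun i => if i = L then (1 + r)/2 else a i with hw
  have hcard : ((Finset.univ.erase L).card : ℝ) = (n:ℝ) - 1 := by
    rw [Finset.card_erase_of_mem (Finset.mem_univ L)]
    simp [Nat.cast_sub (le_trans one_le_two hn)]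
  -- sum of squares of u
  have hSu : ∑ i, u i * u i = ((n:ℝ) - r)/2 := by
    rw [← Finset.add_sum_erase _ _ (Finset.mem_univ L)]
    have h1 : ∑ i ∈ Finset.univ.erase L, u i * u i
        = ((Finset.univ.erase L).card : ℝ) * (1/4) := by
      rw [Finset.sum_congr rfl (fun i hi => ?_), Finset.sum_const, nsmul_eq_mul]
      have hiL : i ≠ L := Finset.ne_of_mem_erase hi
      simp only [hu, if_neg hiL]
      exact ha2 i
    rw [h1, hcard]
    simp only [hu, if_pos rfl]
    rw [← hr2]; ring
  -- eigenvector property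
  have heig : ∀ i, ∑ j, X i j * u j = ((1 - r)/2) * u i := by
    intro i
    rw [← Finset.add_sum_erase _ _ (Finset.mem_univ L)]
    by_cases hi : i = L
    · have h1 : ∑ j ∈ Finset.univ.erase L, X i j * u j
          = ((Finset.univ.erase L).card : ℝ) * (1/4) := by
        rw [Finset.sum_congr rfl (fun j hj => ?_), Finset.sum_const, nsmul_eq_mul]
        have hjL : j ≠ L := Finset.ne_of_mem_erase hj
        rw [hXdef]
        simp only [hu, hi, hjL, and_false, if_false, if_true, if_neg hjL]
        exact ha2 j
      rw [h1, hcard, hXdef]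
      simp only [hu, hi, and_self, if_true, if_pos rfl]
      rw [← hr2]; ring
    · have h1 : ∑ j ∈ Finset.univ.erase L, X i j * u j = 0 := by
        apply Finset.sum_eq_zero
        intro j hj
        have hjL : j ≠ L := Finset.ne_of_mem_erase hj
        rw [hXdef]
        simp [hi, hjL]
      rw [h1, hXdef]
      simp [hu, hi]
      ring
  -- the optimal PSD matrix
  set Y0 : Matrix (Fin n) (Fin n) ℝ :=
    Matrix.of (fun i j => ((1 + r)/((n:ℝ) + r)) * (w i * w j)) with hY0
  have hY0psd : Y0.PosSemidef := by
    refine Matrix.posSemidef_iff_dotProduct_mulVec.mpr ⟨?_, ?_⟩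
    · ext i j
      simp only [hY0, Matrix.conjTranspose_apply, Matrix.of_apply, star_trivial]
      ring
    · intro x
      have hc : ∑ i, ((1 + r)/((n:ℝ) + r)) * (w i * x i)
          = ((1 + r)/((n:ℝ) + r)) * ∑ i, w i * x i := (Finset.mul_sum _ _ _).symm
      have h1 : star x ⬝ᵥ (Y0 *ᵥ x)
          = ∑ i, ∑ j, x i * (((1 + r)/((n:ℝ) + r)) * (w i * w j) * x j) := by
        simp only [dotProduct, Matrix.mulVec, hY0, Matrix.of_apply, Pi.star_apply,
          star_trivial, Finset.mul_sum]
      rw [h1, dsum_factor (fun i => ((1 + r)/((n:ℝ) + r)) * (w i * x i))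
        (fun j => w j * x j) _ (fun i j => by ring), hc]
      have h2 : (0:ℝ) ≤ (1 + r)/((n:ℝ) + r) := by positivity
      nlinarith [sq_nonneg (∑ j, w j * x j)]
  -- the difference is a rank-one matrix
  have hXY : ∀ i j, X i j - Y0 i j = ((1 - r)/((n:ℝ) - r)) * (u i * u j) := by
    intro i j
    rw [hXdef]
    by_cases hi : i = L <;> by_cases hj : j = L <;>
      simp [hY0, hu, hw, hi, hj] <;> field_simp <;> rw [← hr2] <;> ring
  -- the frobenius norm of the difference
  have hfrob : frob (X - Y0) = (r - 1)/2 := by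
    have hsum : ∑ i, ∑ j, ((X - Y0) i j) ^ 2 = ((r - 1)/2) ^ 2 := by
      rw [dsum_factor (fun i => ((1 - r)/((n:ℝ) - r))^2 * (u i * u i)) (fun j => u j * u j)
        _ (fun i j => by rw [Matrix.sub_apply, hXY i j]; ring)]
      rw [← Finset.mul_sum, hSu]
      field_simp
      ring
    rw [frob, hsum, Real.sqrt_sq (by linarith)]
  -- membership and lower bound
  have hmem : ((r - 1)/2) ∈ {d : ℝ | ∃ Y : Matrix (Fin n) (Fin n) ℝ,
      Y.PosSemidef ∧ d = frob (X - Y)} := ⟨Y0, hY0psd, hfrob.symm⟩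
  have hlb : ∀ d ∈ {d : ℝ | ∃ Y : Matrix (Fin n) (Fin n) ℝ,
      Y.PosSemidef ∧ d = frob (X - Y)}, (r - 1)/2 ≤ d := by
    rintro d ⟨Y, hY, rfl⟩
    obtain ⟨S, hS⟩ : ∃ S : ℝ, S = ((n:ℝ) - r)/2 := ⟨_, rfl⟩
    have hSpos : 0 < S := by rw [hS]; linarith
    obtain ⟨F, hF⟩ : ∃ F : ℝ, F = ∑ i, ∑ j, ((X - Y) i j) ^ 2 := ⟨_, rfl⟩
    have hF0 : 0 ≤ F := hF ▸ Finset.sum_nonneg fun i _ => Finset.sum_nonneg fun j _ => sq_nonneg _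
    -- quadratic form of Y at u is nonneg
    have hYq : 0 ≤ ∑ i, ∑ j, Y i j * (u i * u j) := by
      have h0 := hY.dotProduct_mulVec_nonneg u
      simp only [dotProduct, Matrix.mulVec, star_trivial, Pi.star_apply,
        Finset.mul_sum] at h0
      calc (0:ℝ) ≤ ∑ i, ∑ j, u i * (Y i j * u j) := h0
      _ = ∑ i, ∑ j, Y i j * (u i * u j) :=
          Finset.sum_congr rfl fun i _ => Finset.sum_congr rfl fun j _ => by ring
    -- quadratic form of X at u
    have hXq : ∑ i, ∑ j, X i j * (u i * u j) = ((1 - r)/2) * S := by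
      have h1 : ∀ i, ∑ j, X i j * (u i * u j) = ((1 - r)/2) * (u i * u i) := by
        intro i
        have h2 : ∑ j, X i j * (u i * u j) = u i * ∑ j, X i j * u j := by
          rw [Finset.mul_sum]
          exact Finset.sum_congr rfl fun j _ => by ring
        rw [h2, heig i]; ring
      rw [Finset.sum_congr rfl fun i _ => h1 i, ← Finset.mul_sum, hSu, hS]
    have hqlb : ((r - 1)/2) * S ≤ ∑ i, ∑ j, ((Y - X) i j) * (u i * u j) := by
      have h3 : ∑ i, ∑ j, ((Y - X) i j) * (u i * u j)
          = (∑ i, ∑ j, Y i j * (u i * u j)) - ∑ i, ∑ j, X i j * (u i * u j) := by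
        rw [← Finset.sum_sub_distrib]
        exact Finset.sum_congr rfl fun i _ => by
          rw [← Finset.sum_sub_distrib]
          exact Finset.sum_congr rfl fun j _ => by rw [Matrix.sub_apply]; ring
      rw [h3, hXq]
      have := hYq
      linarith
    -- Cauchy-Schwarz
    have hCS : (∑ i, ∑ j, ((Y - X) i j) * (u i * u j)) ^ 2
        ≤ (∑ i : Fin n, ∑ j : Fin n, ((Y - X) i j) ^ 2)
          * (∑ i : Fin n, ∑ j : Fin n, (u i * u j) ^ 2) :=
      dCS (fun i j => (Y - X) i j) (fun i j => u i * u j)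
    have hgsq : ∑ i : Fin n, ∑ j : Fin n, (u i * u j) ^ 2 = S * S := by
      rw [dsum_factor (fun i => u i * u i) (fun j => u j * u j) _ (fun i j => by ring), hSu, hS]
    have hfsq : ∑ i : Fin n, ∑ j : Fin n, ((Y - X) i j) ^ 2 = F := by
      rw [hF]
      exact Finset.sum_congr rfl fun i _ => Finset.sum_congr rfl fun j _ => by
        rw [Matrix.sub_apply, Matrix.sub_apply]; ring
    rw [hfsq, hgsq] at hCS
    have hq2 : (((r - 1)/2) * S) ^ 2 ≤ F * (S * S) :=
      le_trans (pow_le_pow_left₀ (mul_nonneg (by linarith) (le_of_lt hSpos)) hqlb 2) hCS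
    have hSS : 0 < S * S := mul_pos hSpos hSpos
    have hfin : ((r - 1)/2) ^ 2 ≤ F := by
      refine le_of_mul_le_mul_right ?_ hSS
      calc ((r - 1)/2) ^ 2 * (S * S) = (((r - 1)/2) * S) ^ 2 := by ring
        _ ≤ F * (S * S) := hq2
    rw [frob, ← hF]
    exact (Real.le_sqrt (by linarith) hF0).2 hfin
  rw [distPSD]
  have heq : sInf {d : ℝ | ∃ Y : Matrix (Fin n) (Fin n) ℝ,
      Y.PosSemidef ∧ d = frob (X - Y)} = (r - 1)/2 := by
    apply le_antisymm
    · exact csInf_le ⟨(r - 1)/2, hlb⟩ hmem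
    · exact le_csInf ⟨_, hmem⟩ hlb
  rw [heq]
end

section
/- For n ≥ 2, every extreme point X of DDT_n^* := DD_n^* ∩ {X : Tr(X)=1} has the following form: there exists an index q with X_{qq} = 1, X_{iq} = X_{qi} ∈ {1/2, −1/2} for all i ≠ q, and X_{ij} = 0 whenever i ≠ q and j ≠ q. -/
open Matrix BigOperators

lemma extreme_perturb {n : ℕ} {s : Set (Matrix (Fin n) (Fin n) ℝ)}
    {X V : Matrix (Fin n) (Fin n) ℝ}
    (hX : X ∈ Set.extremePoints ℝ s) (h1 : X + V ∈ s) (h2 : X - V ∈ s) : V = 0 := by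
  obtain ⟨hXs, hext⟩ := hX
  have hmid : X ∈ openSegment ℝ (X + V) (X - V) := by
    refine ⟨1/2, 1/2, by norm_num, by norm_num, by norm_num, ?_⟩
    module
  have h := hext h1 h2 hmid
  have h2 : V = (X + V) - X := by module
  rw [h2, h, sub_self]

lemma cons_all {n : ℕ} {X : Matrix (Fin n) (Fin n) ℝ} (hX : DDstar X) (i j : Fin n) :
    0 ≤ X i i + X j j + 2 * X i j ∧ 0 ≤ X i i + X j j - 2 * X i j := by
  rcases le_total i j with h | h
  · exact hX.2 i j h
  · have hs : X i j = X j i := (hX.1.apply i j).symm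
    have := hX.2 j i h
    constructor <;> linarith [this.1, this.2]

lemma stepA {n : ℕ} {X : Matrix (Fin n) (Fin n) ℝ}
    (hX : X ∈ Set.extremePoints ℝ
      {Y : Matrix (Fin n) (Fin n) ℝ | DDstar Y ∧ Y.trace = 1})
    {i j : Fin n} (hij : i ≠ j) :
    X i i + X j j + 2 * X i j = 0 ∨ X i i + X j j - 2 * X i j = 0 := by
  obtain ⟨hD, htr⟩ := hX.1
  by_contra hcon
  push_neg at hcon
  obtain ⟨ha0, hb0⟩ := hcon
  obtain ⟨ha, hb⟩ := cons_all hD i j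
  have ha : 0 < X i i + X j j + 2 * X i j := lt_of_le_of_ne ha (Ne.symm ha0)
  have hb : 0 < X i i + X j j - 2 * X i j := lt_of_le_of_ne hb (Ne.symm hb0)
  set δ : ℝ := min (X i i + X j j + 2 * X i j) (X i i + X j j - 2 * X i j) / 2 with hδdef
  have hδ : 0 < δ := by positivity
  have hδa : 2 * δ ≤ X i i + X j j + 2 * X i j := by
    rw [hδdef]; have := min_le_left (X i i + X j j + 2 * X i j) (X i i + X j j - 2 * X i j); linarith
  have hδb : 2 * δ ≤ X i i + X j j - 2 * X i j := by
    rw [hδdef]; have := min_le_right (X i i + X j j + 2 * X i j) (X i i + X j j - 2 * X i j); linarith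
  set V : Matrix (Fin n) (Fin n) ℝ :=
    Matrix.of (fun k l => if (k = i ∧ l = j) ∨ (k = j ∧ l = i) then δ else 0) with hVdef
  have hVapp : ∀ k l, V k l = if (k = i ∧ l = j) ∨ (k = j ∧ l = i) then δ else 0 := fun _ _ => rfl
  have hVsymm : ∀ k l, V k l = V l k := by
    intro k l
    rw [hVapp, hVapp]
    exact if_congr (by tauto) rfl rfl
  have hVdiag : ∀ k, V k k = 0 := by
    intro k
    rw [hVapp]
    rw [if_neg]
    rintro (⟨h1, h2⟩ | ⟨h1, h2⟩) <;> exact hij (h1 ▸ h2 ▸ rfl)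
  have hVtr : V.trace = 0 := by
    unfold Matrix.trace
    simp [Matrix.diag, hVdiag]
  have hmem : ∀ e : ℝ, e = 1 ∨ e = -1 → X + e • V ∈
      {Y : Matrix (Fin n) (Fin n) ℝ | DDstar Y ∧ Y.trace = 1} := by
    intro e he
    refine ⟨⟨?_, ?_⟩, ?_⟩
    · rw [Matrix.IsSymm]
      ext k l
      simp only [Matrix.transpose_apply, Matrix.add_apply, Matrix.smul_apply, smul_eq_mul]
      rw [hVsymm l k, (hD.1.apply k l)]
    · intro k l hkl
      have hVd1 := hVdiag k
      have hVd2 := hVdiag l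
      simp only [Matrix.add_apply, Matrix.smul_apply, smul_eq_mul, hVd1, hVd2, mul_zero, add_zero]
      by_cases hc : (k = i ∧ l = j) ∨ (k = j ∧ l = i)
      · rw [hVapp, if_pos hc]
        have he2 : e * δ ≤ δ ∧ -δ ≤ e * δ := by
          rcases he with h | h <;> simp [h] <;> linarith
        rcases hc with ⟨h1, h2⟩ | ⟨h1, h2⟩
        · rw [h1, h2]
          constructor <;> [linarith [he2.2]; linarith [he2.1]]
        · rw [h1, h2]
          have hs : X j i = X i j := hD.1.apply i j
          rw [hs]
          constructor <;> [linarith [he2.2]; linarith [he2.1]]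
      · rw [hVapp, if_neg hc, mul_zero, add_zero]
        exact cons_all hD k l
    · have : (X + e • V).trace = X.trace + e * V.trace := by
        simp [Matrix.trace_add, Matrix.trace_smul, smul_eq_mul]
      rw [this, hVtr, htr]; ring
  have h1 : X + V ∈ {Y : Matrix (Fin n) (Fin n) ℝ | DDstar Y ∧ Y.trace = 1} := by
    have := hmem 1 (Or.inl rfl); simpa using this
  have h2 : X - V ∈ {Y : Matrix (Fin n) (Fin n) ℝ | DDstar Y ∧ Y.trace = 1} := by
    have := hmem (-1) (Or.inr rfl)
    have he : X + (-1 : ℝ) • V = X - V := by module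
    rwa [he] at this
  have hV0 := extreme_perturb hX h1 h2
  have : V i j = 0 := by rw [hV0]; rfl
  rw [hVapp, if_pos (Or.inl ⟨rfl, rfl⟩)] at this
  linarith

lemma stepB {n : ℕ} {X : Matrix (Fin n) (Fin n) ℝ}
    (hX : X ∈ Set.extremePoints ℝ
      {Y : Matrix (Fin n) (Fin n) ℝ | DDstar Y ∧ Y.trace = 1})
    {p q : Fin n} (hpq : p ≠ q) (hp : 0 < X p p) (hq : 0 < X q q) : False := by
  obtain ⟨hD, htr⟩ := hX.1
  have hsym : ∀ a b : Fin n, X a b = X b a := fun a b => (hD.1.apply a b).symm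
  have hnn : ∀ i : Fin n, 0 ≤ X i i := by
    intro i
    have := (cons_all hD i i).1
    linarith
  obtain ⟨V, hVsymm, hVpp, hVqq, hVpq, hVqp, hVpl, hVlp, hVql, hVlq, hVkl, hVtr⟩ :
      ∃ V : Matrix (Fin n) (Fin n) ℝ,
        (∀ k l, V k l = V l k) ∧ V p p = 1 ∧ V q q = -1 ∧ V p q = 0 ∧ V q p = 0 ∧
        (∀ l, l ≠ p → l ≠ q → V p l = X p l / (X p p + X l l)) ∧
        (∀ k, k ≠ p → k ≠ q → V k p = X p k / (X p p + X k k)) ∧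
        (∀ l, l ≠ p → l ≠ q → V q l = -(X q l / (X q q + X l l))) ∧
        (∀ k, k ≠ p → k ≠ q → V k q = -(X q k / (X q q + X k k))) ∧
        (∀ k l, k ≠ p → k ≠ q → l ≠ p → l ≠ q → V k l = 0) ∧
        V.trace = 0 := by
    refine ⟨Matrix.of (fun k l =>
      (if k = p ∧ l = p then (1:ℝ) else 0) + (if k = q ∧ l = q then (-1:ℝ) else 0)
      + (if k = p then (if l = p ∨ l = q then 0 else X p l / (X p p + X l l)) else 0)
      + (if l = p then (if k = p ∨ k = q then 0 else X p k / (X p p + X k k)) else 0)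
      - (if k = q then (if l = p ∨ l = q then 0 else X q l / (X q q + X l l)) else 0)
      - (if l = q then (if k = p ∨ k = q then 0 else X q k / (X q q + X k k)) else 0)),
      ?_, ?_, ?_, ?_, ?_, ?_, ?_, ?_, ?_, ?_, ?_⟩
    · intro k l
      show _ = _
      simp only [Matrix.of_apply]
      rw [show (if k = p ∧ l = p then (1:ℝ) else 0) = (if l = p ∧ k = p then (1:ℝ) else 0) from
          if_congr and_comm rfl rfl,
        show (if k = q ∧ l = q then (-1:ℝ) else 0) = (if l = q ∧ k = q then (-1:ℝ) else 0) from
          if_congr and_comm rfl rfl]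
      ring
    · simp [Matrix.of_apply, hpq]
    · simp [Matrix.of_apply, Ne.symm hpq]
    · simp [Matrix.of_apply, hpq, Ne.symm hpq]
    · simp [Matrix.of_apply, hpq, Ne.symm hpq]
    · intro l h1 h2; simp [Matrix.of_apply, h1, h2, hpq, Ne.symm hpq]
    · intro k h1 h2; simp [Matrix.of_apply, h1, h2, hpq, Ne.symm hpq]
    · intro l h1 h2; simp [Matrix.of_apply, h1, h2, hpq, Ne.symm hpq]
    · intro k h1 h2; simp [Matrix.of_apply, h1, h2, hpq, Ne.symm hpq]
    · intro k l h1 h2 h3 h4; simp [Matrix.of_apply, h1, h2, h3, h4]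
    · unfold Matrix.trace
      have hdiag : ∀ k : Fin n, (Matrix.of (fun k l =>
          (if k = p ∧ l = p then (1:ℝ) else 0) + (if k = q ∧ l = q then (-1:ℝ) else 0)
          + (if k = p then (if l = p ∨ l = q then 0 else X p l / (X p p + X l l)) else 0)
          + (if l = p then (if k = p ∨ k = q then 0 else X p k / (X p p + X k k)) else 0)
          - (if k = q then (if l = p ∨ l = q then 0 else X q l / (X q q + X l l)) else 0)
          - (if l = q then (if k = p ∨ k = q then 0 else X q k / (X q q + X k k)) else 0))).diag k
          = (if k = p then (1:ℝ) else 0) - (if k = q then (1:ℝ) else 0) := by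
        intro k
        by_cases h1 : k = p
        · subst h1; simp [Matrix.diag, Matrix.of_apply, hpq]
        · by_cases h2 : k = q
          · subst h2; simp [Matrix.diag, Matrix.of_apply, Ne.symm hpq]
          · simp [Matrix.diag, Matrix.of_apply, h1, h2]
      rw [Fintype.sum_congr _ _ hdiag, Finset.sum_sub_distrib]
      simp
  have hmem : ∀ u : ℝ, -X p p ≤ u → u ≤ X p p → -X q q ≤ u → u ≤ X q q →
      X + u • V ∈ {Y : Matrix (Fin n) (Fin n) ℝ | DDstar Y ∧ Y.trace = 1} := by
    intro u hu1 hu2 hu3 hu4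
    have happ : ∀ k l, (X + u • V) k l = X k l + u * V k l := by
      intro k l
      simp [Matrix.add_apply, Matrix.smul_apply, smul_eq_mul]
    refine ⟨⟨?_, ?_⟩, ?_⟩
    · rw [Matrix.IsSymm]
      ext k l
      rw [Matrix.transpose_apply, happ, happ, hsym l k, hVsymm l k]
    · intro k l hkl
      simp only [happ]
      by_cases hkp : k = p
      · rw [hkp]
        by_cases hlp : l = p
        · rw [hlp, hVpp]
          constructor <;> linarith
        · by_cases hlq : l = q
          · rw [hlq, hVpp, hVqq, hVpq]
            obtain ⟨hc1, hc2⟩ := cons_all hD p q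
            constructor <;> [linarith; linarith]
          · rw [hVpp, hVkl l l hlp hlq hlp hlq, hVpl l hlp hlq]
            have hDl : 0 < X p p + X l l := by have := hnn l; linarith
            obtain ⟨hc1, hc2⟩ := cons_all hD p l
            constructor
            · have key : X p p + u * 1 + (X l l + u * 0) + 2 * (X p l + u * (X p l / (X p p + X l l)))
                  = (X p p + X l l + u) * (X p p + X l l + 2 * X p l) / (X p p + X l l) := by
                field_simp
                ring
              rw [key]
              exact div_nonneg (mul_nonneg (by have := hnn l; linarith) hc1) hDl.le
            · have key : X p p + u * 1 + (X l l + u * 0) - 2 * (X p l + u * (X p l / (X p p + X l l)))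
                  = (X p p + X l l + u) * (X p p + X l l - 2 * X p l) / (X p p + X l l) := by
                field_simp
                ring
              rw [key]
              exact div_nonneg (mul_nonneg (by have := hnn l; linarith) hc2) hDl.le
      · by_cases hkq : k = q
        · rw [hkq]
          by_cases hlp : l = p
          · rw [hlp, hVqq, hVpp, hVqp]
            obtain ⟨hc1, hc2⟩ := cons_all hD q p
            constructor <;> [linarith; linarith]
          · by_cases hlq : l = q
            · rw [hlq, hVqq]
              constructor <;> linarith
            · rw [hVqq, hVkl l l hlp hlq hlp hlq, hVql l hlp hlq]
              have hDl : 0 < X q q + X l l := by have := hnn l; linarith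
              obtain ⟨hc1, hc2⟩ := cons_all hD q l
              constructor
              · have key : X q q + u * (-1) + (X l l + u * 0) + 2 * (X q l + u * -(X q l / (X q q + X l l)))
                    = (X q q + X l l - u) * (X q q + X l l + 2 * X q l) / (X q q + X l l) := by
                  field_simp
                  ring
                rw [key]
                exact div_nonneg (mul_nonneg (by have := hnn l; linarith) hc1) hDl.le
              · have key : X q q + u * (-1) + (X l l + u * 0) - 2 * (X q l + u * -(X q l / (X q q + X l l)))
                    = (X q q + X l l - u) * (X q q + X l l - 2 * X q l) / (X q q + X l l) := by
                  field_simp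
                  ring
                rw [key]
                exact div_nonneg (mul_nonneg (by have := hnn l; linarith) hc2) hDl.le
        · by_cases hlp : l = p
          · rw [hlp, hVpp, hVkl k k hkp hkq hkp hkq, hVlp k hkp hkq]
            have hDl : 0 < X p p + X k k := by have := hnn k; linarith
            obtain ⟨hc1, hc2⟩ := cons_all hD p k
            rw [hsym k p]
            constructor
            · have key : X k k + u * 0 + (X p p + u * 1) + 2 * (X p k + u * (X p k / (X p p + X k k)))
                  = (X p p + X k k + u) * (X p p + X k k + 2 * X p k) / (X p p + X k k) := by
                field_simp
                ring
              rw [key]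
              exact div_nonneg (mul_nonneg (by have := hnn k; linarith) (by linarith)) hDl.le
            · have key : X k k + u * 0 + (X p p + u * 1) - 2 * (X p k + u * (X p k / (X p p + X k k)))
                  = (X p p + X k k + u) * (X p p + X k k - 2 * X p k) / (X p p + X k k) := by
                field_simp
                ring
              rw [key]
              exact div_nonneg (mul_nonneg (by have := hnn k; linarith) (by linarith)) hDl.le
          · by_cases hlq : l = q
            · rw [hlq, hVqq, hVkl k k hkp hkq hkp hkq, hVlq k hkp hkq]
              have hDl : 0 < X q q + X k k := by have := hnn k; linarith
              obtain ⟨hc1, hc2⟩ := cons_all hD q k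
              rw [hsym k q]
              constructor
              · have key : X k k + u * 0 + (X q q + u * (-1)) + 2 * (X q k + u * -(X q k / (X q q + X k k)))
                    = (X q q + X k k - u) * (X q q + X k k + 2 * X q k) / (X q q + X k k) := by
                  field_simp
                  ring
                rw [key]
                exact div_nonneg (mul_nonneg (by have := hnn k; linarith) (by linarith)) hDl.le
              · have key : X k k + u * 0 + (X q q + u * (-1)) - 2 * (X q k + u * -(X q k / (X q q + X k k)))
                    = (X q q + X k k - u) * (X q q + X k k - 2 * X q k) / (X q q + X k k) := by
                  field_simp
                  ring
                rw [key]
                exact div_nonneg (mul_nonneg (by have := hnn k; linarith) (by linarith)) hDl.le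
            · rw [hVkl k k hkp hkq hkp hkq, hVkl l l hlp hlq hlp hlq, hVkl k l hkp hkq hlp hlq]
              obtain ⟨hc1, hc2⟩ := cons_all hD k l
              constructor <;> [linarith; linarith]
    · have htr2 : (X + u • V).trace = X.trace + u * V.trace := by
        simp [Matrix.trace_add, Matrix.trace_smul, smul_eq_mul]
      rw [htr2, hVtr, htr]; ring
  set t : ℝ := min (X p p) (X q q) with htdef
  have ht : 0 < t := lt_min hp hq
  have htp : t ≤ X p p := min_le_left _ _
  have htq : t ≤ X q q := min_le_right _ _
  have h1 := hmem t (by linarith) htp (by linarith) htq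
  have h2 := hmem (-t) (by linarith) (by linarith) (by linarith) (by linarith)
  have heq : X - t • V = X + (-t) • V := by module
  rw [← heq] at h2
  have hV0 := extreme_perturb hX h1 h2
  have hzero : (t • V) p p = 0 := by rw [hV0]; rfl
  rw [Matrix.smul_apply, hVpp, smul_eq_mul, mul_one] at hzero
  linarith


theorem extremePoints_DDT (n : ℕ) (hn : 2 ≤ n)
    (X : Matrix (Fin n) (Fin n) ℝ)
    (hX : X ∈ Set.extremePoints ℝ
      {Y : Matrix (Fin n) (Fin n) ℝ | DDstar Y ∧ Y.trace = 1}) :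
    ∃ q : Fin n, X q q = 1 ∧
      (∀ i : Fin n, i ≠ q → (X i q = 1 / 2 ∨ X i q = -(1 / 2)) ∧ X q i = X i q) ∧
      (∀ i j : Fin n, i ≠ q → j ≠ q → X i j = 0) := by
  obtain ⟨hD, htr⟩ := hX.1
  have hsym : ∀ a b : Fin n, X a b = X b a := fun a b => (hD.1.apply a b).symm
  have hnn : ∀ i : Fin n, 0 ≤ X i i := by
    intro i
    have := (cons_all hD i i).1
    linarith
  have hsum : ∑ i : Fin n, X i i = 1 := htr
  obtain ⟨q, -, hq0⟩ : ∃ q ∈ Finset.univ, X q q ≠ 0 :=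
    Finset.exists_ne_zero_of_sum_ne_zero (by rw [hsum]; norm_num)
  have hq : 0 < X q q := lt_of_le_of_ne (hnn q) (Ne.symm hq0)
  have hothers : ∀ p : Fin n, p ≠ q → X p p = 0 := by
    intro p hpq
    by_contra hp0
    exact stepB hX hpq (lt_of_le_of_ne (hnn p) (Ne.symm hp0)) hq
  have hqq : X q q = 1 := by
    have : ∑ i : Fin n, X i i = X q q :=
      Finset.sum_eq_single_of_mem q (Finset.mem_univ q) (fun b _ hb => hothers b hb)
    rw [hsum] at this
    exact this.symm
  refine ⟨q, hqq, ?_, ?_⟩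
  · intro i hiq
    refine ⟨?_, hsym q i⟩
    have h := stepA hX hiq
    rw [hothers i hiq, hqq] at h
    rcases h with h | h
    · right; linarith
    · left; linarith
  · intro i j hiq hjq
    by_cases hij : i = j
    · rw [hij]
      exact hothers j hjq
    · have h := stepA hX hij
      rw [hothers i hiq, hothers j hjq] at h
      rcases h with h | h <;> linarith
end

section
/- For n ≥ 2, the trace normalized distance between DD_n^* and the PSD cone equals (√n − 1)/2: sup{‖X − P_{S^n_+}(X)‖_F : X ∈ DD_n^*, Tr(X) = 1} = (√n − 1)/2, and the supremum is attained. -/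
open Matrix BigOperators

namespace TDDaux

variable {n : ℕ}

/-- Frobenius inner product. -/
noncomputable def minner (A B : Matrix (Fin n) (Fin n) ℝ) : ℝ := ∑ i, ∑ j, A i j * B i j

/-- Quadratic form. -/
noncomputable def quadf (M : Matrix (Fin n) (Fin n) ℝ) (v : Fin n → ℝ) : ℝ :=
  ∑ j, ∑ k, v j * M j k * v k

lemma frob_nonneg (M : Matrix (Fin n) (Fin n) ℝ) : 0 ≤ frob M := Real.sqrt_nonneg _

lemma frob_sq (M : Matrix (Fin n) (Fin n) ℝ) : frob M ^ 2 = ∑ i, ∑ j, (M i j) ^ 2 := by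
  rw [frob, Real.sq_sqrt]
  positivity

lemma minner_self (M : Matrix (Fin n) (Fin n) ℝ) : minner M M = frob M ^ 2 := by
  rw [frob_sq, minner]
  exact Finset.sum_congr rfl fun i _ => Finset.sum_congr rfl fun j _ => (sq (M i j)).symm ▸ rfl

lemma minner_le (A B : Matrix (Fin n) (Fin n) ℝ) : minner A B ≤ frob A * frob B := by
  have h := Finset.sum_mul_sq_le_sq_mul_sq Finset.univ
    (fun p : Fin n × Fin n => A p.1 p.2) (fun p : Fin n × Fin n => B p.1 p.2)
  have hA : (∑ p : Fin n × Fin n, (A p.1 p.2) ^ 2) = ∑ i, ∑ j, (A i j) ^ 2 :=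
    Fintype.sum_prod_type _
  have hB : (∑ p : Fin n × Fin n, (B p.1 p.2) ^ 2) = ∑ i, ∑ j, (B i j) ^ 2 :=
    Fintype.sum_prod_type _
  have hAB : (∑ p : Fin n × Fin n, A p.1 p.2 * B p.1 p.2) = minner A B :=
    Fintype.sum_prod_type _
  rw [hA, hB, hAB] at h
  calc minner A B ≤ |minner A B| := le_abs_self _
    _ = Real.sqrt ((minner A B) ^ 2) := (Real.sqrt_sq_eq_abs _).symm
    _ ≤ Real.sqrt ((∑ i, ∑ j, (A i j) ^ 2) * ∑ i, ∑ j, (B i j) ^ 2) := Real.sqrt_le_sqrt h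
    _ = frob A * frob B := by
        rw [frob, frob, ← Real.sqrt_mul (by positivity)]

lemma minner_sub_right (A B C : Matrix (Fin n) (Fin n) ℝ) :
    minner A (B - C) = minner A B - minner A C := by
  unfold minner
  rw [← Finset.sum_sub_distrib]
  refine Finset.sum_congr rfl fun i _ => ?_
  rw [← Finset.sum_sub_distrib]
  exact Finset.sum_congr rfl fun j _ => by simp [Matrix.sub_apply]; ring

lemma minner_sub_left (A B C : Matrix (Fin n) (Fin n) ℝ) :
    minner (A - B) C = minner A C - minner B C := by
  unfold minner
  rw [← Finset.sum_sub_distrib]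
  refine Finset.sum_congr rfl fun i _ => ?_
  rw [← Finset.sum_sub_distrib]
  exact Finset.sum_congr rfl fun j _ => by simp [Matrix.sub_apply]; ring

lemma minner_outer (M : Matrix (Fin n) (Fin n) ℝ) (v : Fin n → ℝ) :
    minner M (Matrix.of fun j k => v j * v k) = quadf M v := by
  unfold minner quadf
  exact Finset.sum_congr rfl fun i _ => Finset.sum_congr rfl fun j _ => by
    simp [Matrix.of_apply]; ring

lemma quadf_sub (A B : Matrix (Fin n) (Fin n) ℝ) (v : Fin n → ℝ) :
    quadf (A - B) v = quadf A v - quadf B v := by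
  unfold quadf
  rw [← Finset.sum_sub_distrib]
  refine Finset.sum_congr rfl fun i _ => ?_
  rw [← Finset.sum_sub_distrib]
  exact Finset.sum_congr rfl fun j _ => by simp [Matrix.sub_apply]; ring

lemma frob_smul_outer (c : ℝ) (v : Fin n → ℝ) :
    frob (Matrix.of fun j k => c * (v j * v k)) = |c| * ∑ j, v j ^ 2 := by
  unfold frob
  have h : (∑ i, ∑ j, (Matrix.of (fun j k => c * (v j * v k)) i j) ^ 2)
      = c ^ 2 * ((∑ j, v j ^ 2) * (∑ j, v j ^ 2)) := by
    rw [Finset.sum_mul_sum, Finset.mul_sum]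
    refine Finset.sum_congr rfl fun i _ => ?_
    rw [Finset.mul_sum]
    exact Finset.sum_congr rfl fun j _ => by simp [Matrix.of_apply]; ring
  rw [h, ← sq, Real.sqrt_mul (by positivity), Real.sqrt_sq_eq_abs, Real.sqrt_sq (by positivity)]

lemma frob_sub_comm (A B : Matrix (Fin n) (Fin n) ℝ) : frob (A - B) = frob (B - A) := by
  unfold frob
  congr 1
  exact Finset.sum_congr rfl fun i _ => Finset.sum_congr rfl fun j _ => by
    simp [Matrix.sub_apply]; ring

lemma dot_eq (M : Matrix (Fin n) (Fin n) ℝ) (v : Fin n → ℝ) :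
    dotProduct (star v) (M *ᵥ v) = quadf M v := by
  simp only [dotProduct, Matrix.mulVec, quadf, Pi.star_apply, star_trivial,
    Finset.mul_sum]
  exact Finset.sum_congr rfl fun j _ => Finset.sum_congr rfl fun k _ => by ring

lemma psd_iff (M : Matrix (Fin n) (Fin n) ℝ) :
    M.PosSemidef ↔ (∀ j k, M j k = M k j) ∧ ∀ v : Fin n → ℝ, 0 ≤ quadf M v := by
  rw [posSemidef_iff_dotProduct_mulVec]
  constructor
  · rintro ⟨h1, h2⟩
    refine ⟨fun j k => ?_, fun v => ?_⟩
    · conv_lhs => rw [← h1]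
      simp [Matrix.conjTranspose_apply]
    · have := h2 v
      rwa [dot_eq] at this
  · rintro ⟨h1, h2⟩
    refine ⟨Matrix.ext fun j k => ?_, fun x => ?_⟩
    · simp [Matrix.conjTranspose_apply, h1 j k]
    · rw [dot_eq]; exact h2 x

lemma outer_psd (w : Fin n → ℝ) : (Matrix.of fun j k => w j * w k).PosSemidef := by
  rw [psd_iff]
  refine ⟨fun j k => by simp [Matrix.of_apply]; ring, fun v => ?_⟩
  have h : quadf (Matrix.of fun j k => w j * w k) v = (∑ j, v j * w j) ^ 2 := by
    unfold quadf
    rw [sq, Finset.sum_mul_sum]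
    exact Finset.sum_congr rfl fun j _ => Finset.sum_congr rfl fun k _ => by
      simp [Matrix.of_apply]; ring
  rw [h]; positivity

lemma sum_pairs (g : Fin n → Fin n → ℝ) :
    ∑ i, ∑ j ∈ Finset.univ.erase i, g i j = ∑ i, ∑ j ∈ Finset.univ.erase i, g j i := by
  have h : ∀ g' : Fin n → Fin n → ℝ, (∑ i, ∑ j ∈ Finset.univ.erase i, g' i j)
      = (∑ i, ∑ j, g' i j) - ∑ i, g' i i := by
    intro g'
    rw [← Finset.sum_sub_distrib]
    refine Finset.sum_congr rfl fun i _ => ?_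
    have := Finset.add_sum_erase Finset.univ (g' i) (Finset.mem_univ i)
    linarith
  rw [h, h, Finset.sum_comm]

/-- The key one-row inequality for PSD matrices. -/
lemma key (hn : 2 ≤ n) (W : Matrix (Fin n) (Fin n) ℝ) (hsym : ∀ j k, W j k = W k j)
    (hq : ∀ v, 0 ≤ quadf W v) (i : Fin n) :
    (∑ j ∈ Finset.univ.erase i, |W i j|) - W i i ≤ (Real.sqrt n - 1) / 2 * frob W := by
  classical
  set r := Real.sqrt (n : ℝ) with hrdef
  have hnR : (2:ℝ) ≤ (n:ℝ) := by exact_mod_cast hn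
  have hr2 : r ^ 2 = (n:ℝ) := Real.sq_sqrt (by positivity)
  have hr1 : 1 < r := by nlinarith [Real.sqrt_nonneg (n:ℝ)]
  have hr0 : 0 < r := by linarith
  set s : Fin n → ℝ := fun j => if 0 ≤ W i j then -1 else 1 with hs
  set p : Fin n → ℝ := fun j => if j = i then 1 - r else s j with hp
  set q : Fin n → ℝ := fun j => if j = i then 1 + r else s j with hq'
  set t : Fin n → ℝ := fun j => if j = i then 1 else s j with ht
  have hs2 : ∀ j, s j ^ 2 = 1 := by
    intro j; by_cases h : 0 ≤ W i j <;> simp [hs, h]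
  have hsW : ∀ j, s j * W i j = -|W i j| := by
    intro j; by_cases h : 0 ≤ W i j
    · simp [hs, h, abs_of_nonneg h]
    · simp [hs, h, abs_of_neg (lt_of_not_ge h)]
  -- the quadratic form difference identity
  have hfact : ∀ j k, p j * p k - q j * q k
      = -(2*r) * ((if j = i then (1:ℝ) else 0) * t k + t j * (if k = i then (1:ℝ) else 0)) := by
    intro j k
    by_cases hj : j = i <;> by_cases hk : k = i <;> simp [hp, hq', ht, hj, hk] <;> ring
  have hsum_t : ∑ k, t k * W i k = W i i - ∑ j ∈ Finset.univ.erase i, |W i j| := by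
    have hsplit : t i * W i i + ∑ k ∈ Finset.univ.erase i, t k * W i k
        = ∑ k, t k * W i k :=
      Finset.add_sum_erase Finset.univ (fun k => t k * W i k) (Finset.mem_univ i)
    have h1 : t i * W i i = W i i := by simp [ht]
    have h2 : (∑ k ∈ Finset.univ.erase i, t k * W i k)
        = -∑ j ∈ Finset.univ.erase i, |W i j| := by
      rw [← Finset.sum_neg_distrib]
      refine Finset.sum_congr rfl fun k hk => ?_
      have hki : k ≠ i := Finset.ne_of_mem_erase hk
      rw [ht]; simp only [hki, if_false]
      rw [hsW k]
    rw [h1, h2] at hsplit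
    linarith
  have hQd : quadf W p - quadf W q
      = -(4*r) * (W i i - ∑ j ∈ Finset.univ.erase i, |W i j|) := by
    have e1 : quadf W p - quadf W q
        = ∑ j, ∑ k, (p j * p k - q j * q k) * W j k := by
      unfold quadf
      rw [← Finset.sum_sub_distrib]
      refine Finset.sum_congr rfl fun j _ => ?_
      rw [← Finset.sum_sub_distrib]
      exact Finset.sum_congr rfl fun k _ => by ring
    rw [e1]
    have e2 : ∑ j, ∑ k, (p j * p k - q j * q k) * W j k
        = -(2*r) * ((∑ k, t k * W i k) + (∑ j, t j * W j i)) := by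
      have : ∀ j k, (p j * p k - q j * q k) * W j k
          = -(2*r) * ((if j = i then (1:ℝ) else 0) * (t k * W j k)
            + (if k = i then (1:ℝ) else 0) * (t j * W j k)) := by
        intro j k; rw [hfact]; ring
      simp_rw [this]
      simp_rw [← Finset.mul_sum]
      congr 1
      rw [show (∑ j, ∑ k, ((if j = i then (1:ℝ) else 0) * (t k * W j k)
            + (if k = i then (1:ℝ) else 0) * (t j * W j k)))
          = (∑ j, ∑ k, (if j = i then (1:ℝ) else 0) * (t k * W j k))
            + ∑ j, ∑ k, (if k = i then (1:ℝ) else 0) * (t j * W j k) by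
        rw [← Finset.sum_add_distrib]
        exact Finset.sum_congr rfl fun j _ => Finset.sum_add_distrib]
      congr 1
      · rw [show (∑ j, ∑ k, (if j = i then (1:ℝ) else 0) * (t k * W j k))
            = ∑ j, (if j = i then (∑ k, t k * W j k) else 0) by
          refine Finset.sum_congr rfl fun j _ => ?_
          by_cases hj : j = i <;> simp [hj, Finset.mul_sum]]
        simp
      · rw [Finset.sum_comm]
        rw [show (∑ k, ∑ j, (if k = i then (1:ℝ) else 0) * (t j * W j k))
            = ∑ k, (if k = i then (∑ j, t j * W j k) else 0) by
          refine Finset.sum_congr rfl fun k _ => ?_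
          by_cases hk : k = i <;> simp [hk, Finset.mul_sum]]
        simp
    rw [e2]
    have e3 : (∑ j, t j * W j i) = ∑ k, t k * W i k := by
      exact Finset.sum_congr rfl fun j _ => by rw [hsym j i]
    rw [e3, hsum_t]
    ring
  have hsum_p : ∑ j, p j ^ 2 = 2 * n - 2 * r := by
    have hsplit : p i ^ 2 + ∑ j ∈ Finset.univ.erase i, p j ^ 2 = ∑ j, p j ^ 2 :=
      Finset.add_sum_erase Finset.univ (fun j => p j ^ 2) (Finset.mem_univ i)
    have h1 : p i ^ 2 = (1 - r)^2 := by simp [hp]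
    have h2 : (∑ j ∈ Finset.univ.erase i, p j ^ 2) = (n : ℝ) - 1 := by
      have : ∀ j ∈ Finset.univ.erase i, p j ^ 2 = 1 := by
        intro j hj
        have hji : j ≠ i := Finset.ne_of_mem_erase hj
        rw [hp]; simp only [hji, if_false]; exact hs2 j
      rw [Finset.sum_congr rfl this, Finset.sum_const, Finset.card_erase_of_mem (Finset.mem_univ i),
        Finset.card_univ, Fintype.card_fin]
      have hn1 : 1 ≤ n := by omega
      simp [Nat.cast_sub hn1]
    rw [h1, h2] at hsplit
    nlinarith [hsplit]
  have hQp : quadf W p ≤ frob W * (2 * n - 2 * r) := by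
    have e1 : quadf W p = minner W (Matrix.of fun j k => p j * p k) := (minner_outer W p).symm
    calc quadf W p = minner W (Matrix.of fun j k => p j * p k) := e1
      _ ≤ frob W * frob (Matrix.of fun j k => p j * p k) := minner_le _ _
      _ = frob W * (2 * n - 2 * r) := by
          have : frob (Matrix.of fun j k => p j * p k) = (2 * n - 2 * r) := by
            have h := frob_smul_outer (1 : ℝ) p
            simp only [one_mul, abs_one] at h
            rw [h, hsum_p]
          rw [this]
  have hQq : 0 ≤ quadf W q := hq q
  have h4r : (0:ℝ) < 4 * r := by linarith
  have hfinal : (∑ j ∈ Finset.univ.erase i, |W i j|) - W i i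
      = (quadf W p - quadf W q) / (4 * r) := by
    rw [hQd]; field_simp; ring
  rw [hfinal]
  have hfw : 0 ≤ frob W := frob_nonneg W
  have h1 : quadf W p - quadf W q ≤ frob W * (2 * n - 2 * r) := by linarith
  have h2 : (quadf W p - quadf W q) / (4 * r) ≤ (frob W * (2 * n - 2 * r)) / (4 * r) :=
    (div_le_div_iff_of_pos_right h4r).mpr h1
  have h3 : (frob W * (2 * n - 2 * r)) / (4 * r) = (r - 1) / 2 * frob W := by
    rw [div_eq_iff (ne_of_gt h4r)]
    linear_combination (-2 * frob W) * hr2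
  linarith

/-- Master inequality: for `X ∈ DD*` with trace one and `W` symmetric with nonnegative
quadratic form, `-⟨W, X⟩ ≤ (√n - 1)/2 ⬝ ‖W‖_F`. -/
lemma master (hn : 2 ≤ n) (X W : Matrix (Fin n) (Fin n) ℝ) (hX : DDstar X)
    (htr : X.trace = 1) (hsym : ∀ j k, W j k = W k j) (hq : ∀ v, 0 ≤ quadf W v) :
    -(minner W X) ≤ (Real.sqrt n - 1) / 2 * frob W := by
  classical
  have htr' : (∑ i, X i i) = 1 := by
    simpa [Matrix.trace, Matrix.diag] using htr
  have hdiag : ∀ i, 0 ≤ X i i := by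
    intro i
    have := (hX.2 i i le_rfl).1
    linarith
  have hoff : ∀ i j, |X i j| ≤ (X i i + X j j) / 2 := by
    intro i j
    rcases le_total i j with h | h
    · have h1 := (hX.2 i j h).1
      have h2 := (hX.2 i j h).2
      rw [abs_le]; constructor <;> linarith
    · have h1 := (hX.2 j i h).1
      have h2 := (hX.2 j i h).2
      have hXs : X i j = X j i := (hX.1.apply j i).symm ▸ rfl
      rw [abs_le]
      constructor <;> rw [hXs] <;> linarith
  have step1 : -(minner W X)
      ≤ ∑ i, (-(W i i * X i i) + ∑ j ∈ Finset.univ.erase i, |W i j| * ((X i i + X j j) / 2)) := by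
    have e0 : -(minner W X) = ∑ i, ∑ j, -(W i j * X i j) := by
      unfold minner
      rw [← Finset.sum_neg_distrib]
      exact Finset.sum_congr rfl fun i _ => (Finset.sum_neg_distrib _).symm
    rw [e0]
    apply Finset.sum_le_sum
    intro i _
    have hsplit : -(W i i * X i i) + ∑ j ∈ Finset.univ.erase i, -(W i j * X i j)
        = ∑ j, -(W i j * X i j) :=
      Finset.add_sum_erase Finset.univ (fun j => -(W i j * X i j)) (Finset.mem_univ i)
    rw [← hsplit]
    apply add_le_add le_rfl
    apply Finset.sum_le_sum
    intro j _
    calc -(W i j * X i j) ≤ |W i j * X i j| := neg_le_abs _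
      _ = |W i j| * |X i j| := abs_mul _ _
      _ ≤ |W i j| * ((X i i + X j j) / 2) :=
        mul_le_mul_of_nonneg_left (hoff i j) (abs_nonneg _)
  have swap : (∑ i, ∑ j ∈ Finset.univ.erase i, |W i j| * ((X i i + X j j) / 2))
      = ∑ i, X i i * ∑ j ∈ Finset.univ.erase i, |W i j| := by
    have e1 : (∑ i, ∑ j ∈ Finset.univ.erase i, |W i j| * ((X i i + X j j) / 2))
        = (∑ i, ∑ j ∈ Finset.univ.erase i, |W i j| * X i i / 2)
          + ∑ i, ∑ j ∈ Finset.univ.erase i, |W i j| * X j j / 2 := by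
      rw [← Finset.sum_add_distrib]
      refine Finset.sum_congr rfl fun i _ => ?_
      rw [← Finset.sum_add_distrib]
      exact Finset.sum_congr rfl fun j _ => by ring
    have e2 : (∑ i, ∑ j ∈ Finset.univ.erase i, |W i j| * X j j / 2)
        = ∑ i, ∑ j ∈ Finset.univ.erase i, |W i j| * X i i / 2 := by
      rw [sum_pairs (fun i j => |W i j| * X j j / 2)]
      exact Finset.sum_congr rfl fun i _ => Finset.sum_congr rfl fun j _ => by
        rw [hsym j i]
    rw [e1, e2, ← Finset.sum_add_distrib]
    refine Finset.sum_congr rfl fun i _ => ?_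
    rw [← Finset.sum_add_distrib, Finset.mul_sum]
    exact Finset.sum_congr rfl fun j _ => by ring
  have step2 : (∑ i, (-(W i i * X i i)
        + ∑ j ∈ Finset.univ.erase i, |W i j| * ((X i i + X j j) / 2)))
      = ∑ i, X i i * ((∑ j ∈ Finset.univ.erase i, |W i j|) - W i i) := by
    rw [Finset.sum_add_distrib, swap, ← Finset.sum_add_distrib]
    exact Finset.sum_congr rfl fun i _ => by ring
  have step3 : (∑ i, X i i * ((∑ j ∈ Finset.univ.erase i, |W i j|) - W i i))
      ≤ ∑ i, X i i * ((Real.sqrt n - 1) / 2 * frob W) := by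
    apply Finset.sum_le_sum
    intro i _
    exact mul_le_mul_of_nonneg_left (key hn W hsym hq i) (hdiag i)
  have step4 : (∑ i, X i i * ((Real.sqrt n - 1) / 2 * frob W))
      = (Real.sqrt n - 1) / 2 * frob W := by
    rw [← Finset.sum_mul, htr', one_mul]
  linarith

noncomputable def toE (M : Matrix (Fin n) (Fin n) ℝ) : EuclideanSpace ℝ (Fin n × Fin n) :=
  (WithLp.equiv 2 _).symm (fun p => M p.1 p.2)

lemma toE_apply (M : Matrix (Fin n) (Fin n) ℝ) (p : Fin n × Fin n) : toE M p = M p.1 p.2 := rfl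

lemma toE_sub (A B : Matrix (Fin n) (Fin n) ℝ) : toE (A - B) = toE A - toE B := rfl

lemma norm_toE (M : Matrix (Fin n) (Fin n) ℝ) : ‖toE M‖ = frob M := by
  rw [EuclideanSpace.norm_eq, frob]
  congr 1
  rw [Fintype.sum_prod_type]
  simp [toE, sq_abs]

lemma inner_toE (A B : Matrix (Fin n) (Fin n) ℝ) :
    (inner ℝ (toE A) (toE B) : ℝ) = minner A B := by
  simp [PiLp.inner_apply, RCLike.inner_apply, toE, minner, Fintype.sum_prod_type, mul_comm]

/-- Upper bound: every `X ∈ DD*` with trace one is within `(√n-1)/2` of the PSD cone. -/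
lemma upper (hn : 2 ≤ n) (X : Matrix (Fin n) (Fin n) ℝ) (hX : DDstar X) (htr : X.trace = 1) :
    distPSD X ≤ (Real.sqrt n - 1) / 2 := by
  classical
  set E := EuclideanSpace ℝ (Fin n × Fin n)
  set K : Set E := {x | (∀ j k : Fin n, x (j, k) = x (k, j)) ∧
    ∀ v : Fin n → ℝ, 0 ≤ ∑ j, ∑ k, v j * x (j, k) * v k} with hKdef
  have hmem : ∀ Y : Matrix (Fin n) (Fin n) ℝ, toE Y ∈ K ↔ Y.PosSemidef := by
    intro Y
    rw [psd_iff]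
    exact Iff.rfl
  have hcont : ∀ pq : Fin n × Fin n, Continuous (fun x : E => x pq) :=
    fun pq => (EuclideanSpace.proj pq).continuous
  have hclosed : IsClosed K := by
    have h1 : IsClosed {x : E | ∀ j k : Fin n, x (j, k) = x (k, j)} := by
      have : {x : E | ∀ j k : Fin n, x (j, k) = x (k, j)}
          = ⋂ j, ⋂ k, {x : E | x (j, k) = x (k, j)} := by
        ext x; simp [Set.mem_iInter]
      rw [this]
      exact isClosed_iInter fun j => isClosed_iInter fun k =>
        isClosed_eq (hcont _) (hcont _)
    have h2 : IsClosed {x : E | ∀ v : Fin n → ℝ, 0 ≤ ∑ j, ∑ k, v j * x (j, k) * v k} := by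
      have : {x : E | ∀ v : Fin n → ℝ, 0 ≤ ∑ j, ∑ k, v j * x (j, k) * v k}
          = ⋂ v : Fin n → ℝ, {x : E | 0 ≤ ∑ j, ∑ k, v j * x (j, k) * v k} := by
        ext x; simp [Set.mem_iInter]
      rw [this]
      refine isClosed_iInter fun v => isClosed_le continuous_const ?_
      apply continuous_finset_sum
      intro j _
      apply continuous_finset_sum
      intro k _
      exact (continuous_const.mul (hcont (j, k))).mul continuous_const
    have : K = {x : E | ∀ j k : Fin n, x (j, k) = x (k, j)}
        ∩ {x : E | ∀ v : Fin n → ℝ, 0 ≤ ∑ j, ∑ k, v j * x (j, k) * v k} := rfl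
    rw [this]
    exact h1.inter h2
  have hconv : Convex ℝ K := by
    rintro x ⟨hx1, hx2⟩ y ⟨hy1, hy2⟩ a b ha hb hab
    constructor
    · intro j k
      have e : ∀ pq : Fin n × Fin n, (a • x + b • y) pq = a * x pq + b * y pq := by
        intro pq
        rfl
      rw [e, e, hx1 j k, hy1 j k]
    · intro v
      have e : ∀ j k : Fin n, v j * ((a • x + b • y) (j, k)) * v k
          = a * (v j * x (j, k) * v k) + b * (v j * y (j, k) * v k) := by
        intro j k
        show v j * (a * x (j, k) + b * y (j, k)) * v k = _
        ring
      simp_rw [e, Finset.sum_add_distrib, ← Finset.mul_sum]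
      exact add_nonneg (mul_nonneg ha (hx2 v)) (mul_nonneg hb (hy2 v))
  have hKne : K.Nonempty := by
    refine ⟨0, fun j k => rfl, fun v => ?_⟩
    have : ∀ j k : Fin n, v j * ((0 : E) (j, k)) * v k = 0 := by
      intro j k
      show v j * (0 : ℝ) * v k = 0
      ring
    simp_rw [this]
    simp
  obtain ⟨v, hvK, hproj⟩ :=
    exists_norm_eq_iInf_of_complete_convex hKne hclosed.isComplete hconv (toE X)
  have hchar := (norm_eq_iInf_iff_real_inner_le_zero hconv hvK).1 hproj
  set Y : Matrix (Fin n) (Fin n) ℝ := Matrix.of (fun j k => v (j, k)) with hYdef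
  have hvY : toE Y = v := rfl
  have hYpsd : Y.PosSemidef := (hmem Y).1 (hvY ▸ hvK)
  have hchar' : ∀ C : Matrix (Fin n) (Fin n) ℝ, C.PosSemidef →
      minner (X - Y) (C - Y) ≤ 0 := by
    intro C hC
    have h := hchar (toE C) ((hmem C).2 hC)
    rw [← hvY, ← toE_sub, ← toE_sub, inner_toE] at h
    exact h
  have hZ0 : minner (X - Y) Y = 0 := by
    have h2 := hchar' (Y + Y) (hYpsd.add hYpsd)
    rw [add_sub_cancel_right] at h2
    have h0 := hchar' 0 Matrix.PosSemidef.zero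
    have e : minner (X - Y) ((0 : Matrix (Fin n) (Fin n) ℝ) - Y)
        = minner (X - Y) 0 - minner (X - Y) Y := minner_sub_right _ _ _
    have ez : minner (X - Y) (0 : Matrix (Fin n) (Fin n) ℝ) = 0 := by
      simp [minner]
    rw [e, ez] at h0
    linarith
  have hqZ : ∀ w : Fin n → ℝ, 0 ≤ quadf (Y - X) w := by
    intro w
    have h := hchar' (Y + Matrix.of (fun j k => w j * w k)) (hYpsd.add (outer_psd w))
    rw [add_sub_cancel_left, minner_outer] at h
    have e := quadf_sub Y X w
    have e2 := quadf_sub X Y w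
    linarith
  have hsymZ : ∀ j k, (Y - X) j k = (Y - X) k j := by
    intro j k
    have hYs : Y j k = Y k j := ((psd_iff Y).1 hYpsd).1 j k
    have hXs : X j k = X k j := (hX.1.apply k j).symm ▸ rfl
    simp [Matrix.sub_apply, hYs, hXs]
  set d := frob (X - Y) with hd
  have hd0 : 0 ≤ d := frob_nonneg _
  have hbdd : BddBelow {d : ℝ | ∃ C : Matrix (Fin n) (Fin n) ℝ,
      C.PosSemidef ∧ d = frob (X - C)} := by
    refine ⟨0, ?_⟩
    rintro z ⟨C, hC, rfl⟩
    exact frob_nonneg _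
  have hdS : distPSD X ≤ d := csInf_le hbdd ⟨Y, hYpsd, rfl⟩
  have hmu0 : (0:ℝ) ≤ (Real.sqrt n - 1) / 2 := by
    have : (1:ℝ) ≤ Real.sqrt n := by
      rw [show (1:ℝ) = Real.sqrt 1 by simp]
      exact Real.sqrt_le_sqrt (by exact_mod_cast Nat.one_le_of_lt hn)
    linarith
  have hd2 : d ^ 2 = minner (X - Y) X := by
    rw [← minner_self]
    have : minner (X - Y) (X - Y) = minner (X - Y) X - minner (X - Y) Y :=
      minner_sub_right _ _ _
    rw [this, hZ0, sub_zero]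
  have hmast := master hn X (Y - X) hX htr hsymZ hqZ
  have hflip : -(minner (Y - X) X) = minner (X - Y) X := by
    have e1 := minner_sub_left Y X X
    have e2 := minner_sub_left X Y X
    linarith
  have hfr : frob (Y - X) = d := frob_sub_comm Y X
  rw [hflip, hfr] at hmast
  -- d ^ 2 ≤ μ * d
  have hdmu : d ^ 2 ≤ (Real.sqrt n - 1) / 2 * d := by rw [hd2]; exact hmast
  rcases eq_or_lt_of_le hd0 with h | h
  · rw [← h] at hdS
    linarith
  · have : d ≤ (Real.sqrt n - 1) / 2 := by nlinarith
    linarith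

/-- The extremal matrix `(e0 e^T + e e0^T)/2` attains the distance `(sqrt n - 1)/2`. -/
lemma exists_extremal (hn : 2 ≤ n) :
    ∃ X : Matrix (Fin n) (Fin n) ℝ, DDstar X ∧ X.trace = 1 ∧
      distPSD X = (Real.sqrt n - 1) / 2 := by
  classical
  set r := Real.sqrt (n : ℝ) with hrdef
  have hnR : (2:ℝ) ≤ (n:ℝ) := by exact_mod_cast hn
  have hr2 : r ^ 2 = (n:ℝ) := Real.sq_sqrt (by positivity)
  have hr1 : 1 < r := by nlinarith [Real.sqrt_nonneg (n:ℝ)]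
  have hr0 : 0 < r := by linarith
  have h4r : (0:ℝ) < 4 * r := by linarith
  have hn0 : 0 < n := by omega
  set i0 : Fin n := ⟨0, hn0⟩ with hi0
  set dv : Fin n → ℝ := fun j => if j = i0 then 1 else 0 with hdv
  have hdv0 : ∀ j, 0 ≤ dv j := fun j => by by_cases h : j = i0 <;> simp [hdv, h]
  set X0 : Matrix (Fin n) (Fin n) ℝ := Matrix.of (fun j k => (dv j + dv k) / 2) with hX0
  have hX0app : ∀ j k, X0 j k = (dv j + dv k) / 2 := fun j k => rfl
  have hDD : DDstar X0 := by
    constructor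
    · ext j k
      simp only [Matrix.transpose_apply, hX0, Matrix.of_apply]
      ring
    · intro i j _
      have h1 := hdv0 i
      have h2 := hdv0 j
      rw [hX0app i i, hX0app j j, hX0app i j]
      constructor <;> linarith
  have htr : X0.trace = 1 := by
    have e1 : X0.trace = ∑ j, (dv j + dv j) / 2 := by
      simp [Matrix.trace, Matrix.diag, hX0]
    rw [e1]
    have e2 : ∀ j : Fin n, (dv j + dv j) / 2 = dv j := fun j => by ring
    simp_rw [e2, hdv]
    simp
  set p : Fin n → ℝ := fun j => if j = i0 then 1 - r else 1 with hp
  set q : Fin n → ℝ := fun j => if j = i0 then 1 + r else 1 with hq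
  have hpq : ∀ j k, X0 j k = (q j * q k - p j * p k) / (4 * r) := by
    intro j k
    rw [hX0app]
    by_cases hj : j = i0 <;> by_cases hk : k = i0 <;>
      simp only [hdv, hp, hq, hj, hk, if_true, if_false] <;>
      field_simp <;>
      try ring
  have hsum_p : ∑ j, p j ^ 2 = 2 * n - 2 * r := by
    have hsplit : p i0 ^ 2 + ∑ j ∈ Finset.univ.erase i0, p j ^ 2 = ∑ j, p j ^ 2 :=
      Finset.add_sum_erase Finset.univ (fun j => p j ^ 2) (Finset.mem_univ i0)
    have h1 : p i0 ^ 2 = (1 - r) ^ 2 := by simp [hp]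
    have h2 : ∑ j ∈ Finset.univ.erase i0, p j ^ 2 = (n:ℝ) - 1 := by
      have e : ∀ j ∈ Finset.univ.erase i0, p j ^ 2 = 1 := by
        intro j hj
        have hji : j ≠ i0 := Finset.ne_of_mem_erase hj
        simp [hp, hji]
      rw [Finset.sum_congr rfl e, Finset.sum_const,
        Finset.card_erase_of_mem (Finset.mem_univ i0), Finset.card_univ, Fintype.card_fin]
      have hn1 : 1 ≤ n := by omega
      simp [Nat.cast_sub hn1]
    rw [h1, h2] at hsplit
    nlinarith [hsplit]
  have hdot : ∑ j, p j * q j = 0 := by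
    have hsplit : p i0 * q i0 + ∑ j ∈ Finset.univ.erase i0, p j * q j = ∑ j, p j * q j :=
      Finset.add_sum_erase Finset.univ (fun j => p j * q j) (Finset.mem_univ i0)
    have h1 : p i0 * q i0 = 1 - r ^ 2 := by
      simp [hp, hq]
      ring
    have h2 : ∑ j ∈ Finset.univ.erase i0, p j * q j = (n:ℝ) - 1 := by
      have e : ∀ j ∈ Finset.univ.erase i0, p j * q j = 1 := by
        intro j hj
        have hji : j ≠ i0 := Finset.ne_of_mem_erase hj
        simp [hp, hq, hji]
      rw [Finset.sum_congr rfl e, Finset.sum_const,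
        Finset.card_erase_of_mem (Finset.mem_univ i0), Finset.card_univ, Fintype.card_fin]
      have hn1 : 1 ≤ n := by omega
      simp [Nat.cast_sub hn1]
    rw [h1, h2] at hsplit
    have : (1 - r ^ 2) + ((n:ℝ) - 1) = 0 := by rw [hr2]; ring
    linarith
  set Y0 : Matrix (Fin n) (Fin n) ℝ := Matrix.of (fun j k => (1/(4*r)) * (q j * q k)) with hY0
  have hY0app : ∀ j k, Y0 j k = (1/(4*r)) * (q j * q k) := fun j k => rfl
  have hY0psd : Y0.PosSemidef := by
    rw [psd_iff]
    constructor
    · intro j k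
      rw [hY0app, hY0app]
      ring
    · intro w
      have e : quadf Y0 w = (1/(4*r)) * (∑ j, w j * q j) ^ 2 := by
        unfold quadf
        rw [sq, Finset.sum_mul_sum, Finset.mul_sum]
        refine Finset.sum_congr rfl fun j _ => ?_
        rw [Finset.mul_sum]
        refine Finset.sum_congr rfl fun k _ => ?_
        rw [hY0app]
        ring
      rw [e]
      positivity
  have hXY0 : X0 - Y0 = Matrix.of (fun j k => (-(1/(4*r))) * (p j * p k)) := by
    ext j k
    rw [Matrix.sub_apply, hpq j k, hY0app, Matrix.of_apply]
    ring
  have hhalf : (1/(4*r)) * (2*(n:ℝ) - 2*r) = (r - 1) / 2 := by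
    rw [div_mul_eq_mul_div, one_mul, div_eq_div_iff (ne_of_gt h4r) two_ne_zero]
    linear_combination (-4:ℝ) * hr2
  have hfrobXY0 : frob (X0 - Y0) = (r - 1) / 2 := by
    rw [hXY0, frob_smul_outer, hsum_p, abs_neg,
      abs_of_pos (by positivity : (0:ℝ) < 1/(4*r))]
    exact hhalf
  have hlow : ∀ C : Matrix (Fin n) (Fin n) ℝ, C.PosSemidef →
      (r - 1) / 2 ≤ frob (X0 - C) := by
    intro C hC
    have hqC : 0 ≤ quadf C p := ((psd_iff C).1 hC).2 p
    have hOuter : minner (C - X0) (Matrix.of fun j k => p j * p k)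
        = quadf C p - quadf X0 p := by
      rw [minner_sub_left, minner_outer, minner_outer]
    have hX0p : quadf X0 p = -((2*(n:ℝ) - 2*r) ^ 2) / (4*r) := by
      have e : ∀ j k : Fin n, p j * X0 j k * p k
          = (1/(4*r)) * ((p j * q j) * (p k * q k) - (p j * p j) * (p k * p k)) := by
        intro j k
        rw [hpq j k]
        ring
      unfold quadf
      simp_rw [e]
      simp_rw [← Finset.mul_sum]
      have e2 : (∑ j, ∑ k, ((p j * q j) * (p k * q k) - (p j * p j) * (p k * p k)))
          = (∑ j, p j * q j) ^ 2 - (∑ j, p j * p j) ^ 2 := by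
        have einner : ∀ j : Fin n, (∑ k, ((p j * q j) * (p k * q k)
              - (p j * p j) * (p k * p k)))
            = (p j * q j) * (∑ k, p k * q k) - (p j * p j) * (∑ k, p k * p k) := by
          intro j
          rw [Finset.mul_sum, Finset.mul_sum, ← Finset.sum_sub_distrib]
        simp_rw [einner]
        rw [Finset.sum_sub_distrib, ← Finset.sum_mul, ← Finset.sum_mul, sq, sq]
      rw [e2, hdot]
      have e3 : (∑ j, p j * p j) = 2*(n:ℝ) - 2*r := by
        rw [← hsum_p]
        exact Finset.sum_congr rfl fun j _ => by rw [← sq]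
      rw [e3]
      ring
    have hCS : minner (C - X0) (Matrix.of fun j k => p j * p k)
        ≤ frob (C - X0) * (2*(n:ℝ) - 2*r) := by
      calc minner (C - X0) (Matrix.of fun j k => p j * p k)
          ≤ frob (C - X0) * frob (Matrix.of fun j k => p j * p k) := minner_le _ _
        _ = frob (C - X0) * (2*(n:ℝ) - 2*r) := by
            have h := frob_smul_outer (1 : ℝ) p
            simp only [one_mul, abs_one] at h
            rw [h, hsum_p]
    have hpos : (0:ℝ) < 2*(n:ℝ) - 2*r := by nlinarith
    have hfr : frob (C - X0) = frob (X0 - C) := frob_sub_comm _ _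
    have h5 : (2*(n:ℝ) - 2*r) ^ 2 / (4*r) = (r - 1) / 2 * (2*(n:ℝ) - 2*r) := by
      rw [div_eq_iff (ne_of_gt h4r)]
      linear_combination (4*r - 4*(n:ℝ)) * hr2
    have hineq : (r - 1) / 2 * (2*(n:ℝ) - 2*r) ≤ frob (X0 - C) * (2*(n:ℝ) - 2*r) := by
      rw [← h5]
      have e0 : (2*(n:ℝ) - 2*r) ^ 2 / (4*r) = 0 - quadf X0 p := by rw [hX0p]; ring
      rw [e0]
      calc 0 - quadf X0 p ≤ quadf C p - quadf X0 p := by linarith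
        _ = minner (C - X0) (Matrix.of fun j k => p j * p k) := hOuter.symm
        _ ≤ frob (C - X0) * (2*(n:ℝ) - 2*r) := hCS
        _ = frob (X0 - C) * (2*(n:ℝ) - 2*r) := by rw [hfr]
    exact le_of_mul_le_mul_right hineq hpos
  have hdist : distPSD X0 = (r - 1) / 2 := by
    apply le_antisymm
    · apply csInf_le
      · refine ⟨0, ?_⟩
        rintro z ⟨C, hC, rfl⟩
        exact frob_nonneg _
      · exact ⟨Y0, hY0psd, hfrobXY0.symm⟩
    · refine le_csInf ⟨_, Y0, hY0psd, rfl⟩ ?_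
      rintro b ⟨C, hC, rfl⟩
      exact hlow C hC
  exact ⟨X0, hDD, htr, by rw [hdist]⟩

end TDDaux

theorem trace_dist_DDstar (n : ℕ) (hn : 2 ≤ n) :
    IsGreatest {d : ℝ | ∃ X : Matrix (Fin n) (Fin n) ℝ,
        DDstar X ∧ X.trace = 1 ∧ d = distPSD X} ((Real.sqrt n - 1) / 2) := by
  constructor
  · obtain ⟨X, h1, h2, h3⟩ := TDDaux.exists_extremal hn
    exact ⟨X, h1, h2, h3.symm⟩
  · rintro d ⟨X, hX, htr, rfl⟩
    exact TDDaux.upper hn X hX htr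
end

section
/- Let n ≥ 4 and X ∈ DD_n^* with ‖X‖_F = 1. Define X̄ symmetric by X̄_{ii} = (1/C(n,2))((n−2)/2 · X_{ii} + Tr(X)/2) and X̄_{ij} = (1/C(n,2))X_{ij} for i ≠ j. Then X̄ is positive semidefinite and ‖X − (n−1)X̄‖_F ≤ (n−2)/n; consequently the Frobenius distance from X to the PSD cone is at most (n−2)/n. -/
open Matrix BigOperators

private lemma pairQuadNonneg (a b c vi vj : ℝ) (h1 : 0 ≤ a + b + 2 * c)
    (h2 : 0 ≤ a + b - 2 * c) :
    0 ≤ (a + b) / 4 * (vi ^ 2 + vj ^ 2) + c * (vi * vj) := by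
  nlinarith [mul_nonneg h1 (sq_nonneg (vi + vj)), mul_nonneg h2 (sq_nonneg (vi - vj))]

theorem DDstar_bar_bound (n : ℕ) (hn : 4 ≤ n) (X : Matrix (Fin n) (Fin n) ℝ)
    (hX : DDstar X) (hnorm : frob X = 1)
    (Xb : Matrix (Fin n) (Fin n) ℝ)
    (hXb : ∀ i j : Fin n,
      Xb i j = if i = j
        then (1 / ((n : ℝ) * (n - 1) / 2)) * (((n : ℝ) - 2) / 2 * X i i + X.trace / 2)
        else (1 / ((n : ℝ) * (n - 1) / 2)) * X i j) :
    Xb.PosSemidef ∧ frob (X - ((n : ℝ) - 1) • Xb) ≤ ((n : ℝ) - 2) / n ∧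
      distPSD X ≤ ((n : ℝ) - 2) / n := by
  obtain ⟨hsym, hdd⟩ := hX
  have hsa : ∀ i j, X j i = X i j := fun i j => hsym.apply i j
  have hn4 : (4 : ℝ) ≤ (n : ℝ) := by exact_mod_cast hn
  have hn0 : (n : ℝ) ≠ 0 := by linarith
  have hn1 : (n : ℝ) - 1 ≠ 0 := by linarith
  have hCpos : (0 : ℝ) < (n : ℝ) * ((n : ℝ) - 1) / 2 := by nlinarith
  have htr : X.trace = ∑ i, X i i := by simp [Matrix.trace, Matrix.diag]
  have hpair : ∀ i j : Fin n,
      0 ≤ X i i + X j j + 2 * X i j ∧ 0 ≤ X i i + X j j - 2 * X i j := by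
    intro i j
    rcases le_total i j with h | h
    · exact hdd i j h
    · obtain ⟨h1, h2⟩ := hdd j i h
      have hs := hsa i j
      constructor <;> linarith
  have hXbsymm : ∀ i j, Xb j i = Xb i j := by
    intro i j
    rw [hXb, hXb]
    rcases eq_or_ne i j with rfl | h
    · rfl
    · rw [if_neg (Ne.symm h), if_neg h, hsa i j]
  have hherm : Xb.IsHermitian := by
    have : Xbᴴ = Xb := by
      ext i j
      simp [Matrix.conjTranspose_apply, hXbsymm]
    exact this
  -- The key quadratic form inequality
  have hkey : ∀ v : Fin n → ℝ, 0 ≤ v ⬝ᵥ Xb *ᵥ v := by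
    intro v
    set T : ℝ := ∑ i, X i i * v i ^ 2 with hT
    set S : ℝ := ∑ i, v i ^ 2 with hS
    set Q : ℝ := ∑ i, ∑ j, v i * X i j * v j with hQ
    -- LHS expansion
    have e1 : v ⬝ᵥ Xb *ᵥ v
        = (1 / ((n : ℝ) * ((n : ℝ) - 1) / 2))
          * (Q + (((n : ℝ) - 4) / 2 * T + X.trace / 2 * S)) := by
      have e2 : ∀ i j : Fin n, v i * Xb i j * v j
          = (1 / ((n : ℝ) * ((n : ℝ) - 1) / 2)) * (v i * X i j * v j)
            + (if i = j then (1 / ((n : ℝ) * ((n : ℝ) - 1) / 2))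
                * (((n : ℝ) - 4) / 2 * (X i i * v i ^ 2) + X.trace / 2 * v i ^ 2) else 0) := by
        intro i j
        rcases eq_or_ne i j with rfl | h
        · rw [hXb, if_pos rfl, if_pos rfl]; ring
        · rw [hXb, if_neg h, if_neg h]; ring
      have e0 : v ⬝ᵥ Xb *ᵥ v = ∑ i, ∑ j, v i * Xb i j * v j := by
        simp [dotProduct, mulVec, Finset.mul_sum, mul_assoc]
      rw [e0]
      simp_rw [e2, Finset.sum_add_distrib, Finset.sum_ite_eq, Finset.mem_univ, if_true,
        ← Finset.mul_sum]
      rw [← hQ, Finset.sum_add_distrib, ← Finset.mul_sum, ← Finset.mul_sum, ← hT, ← hS]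
      ring
    -- the pairwise decomposition
    have e3 : ∑ i, ∑ j, (if i = j then (0 : ℝ)
          else (X i i + X j j) / 4 * (v i ^ 2 + v j ^ 2) + X i j * (v i * v j))
        = Q + (((n : ℝ) - 4) / 2 * T + X.trace / 2 * S) := by
      have e4 : ∀ i j : Fin n, (if i = j then (0 : ℝ)
            else (X i i + X j j) / 4 * (v i ^ 2 + v j ^ 2) + X i j * (v i * v j))
          = ((X i i * v i ^ 2) / 4 + X i i / 4 * v j ^ 2 + v i ^ 2 / 4 * X j j
              + (1 : ℝ) / 4 * (X j j * v j ^ 2) + v i * X i j * v j)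
            - (if i = j then 2 * (X i i * v i ^ 2) else 0) := by
        intro i j
        rcases eq_or_ne i j with rfl | h
        · rw [if_pos rfl, if_pos rfl]; ring
        · rw [if_neg h, if_neg h]; ring
      simp_rw [e4, Finset.sum_sub_distrib, Finset.sum_add_distrib, Finset.sum_ite_eq,
        Finset.mem_univ, if_true, Finset.sum_const, Finset.card_univ, Fintype.card_fin,
        nsmul_eq_mul, ← Finset.mul_sum, ← Finset.sum_div, ← Finset.sum_mul]
      rw [← hQ, ← hT, htr]
      simp only [← Finset.sum_div, ← hS]
      ring
    rw [e1, ← e3]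
    apply mul_nonneg (le_of_lt (by positivity))
    apply Finset.sum_nonneg
    intro i _
    apply Finset.sum_nonneg
    intro j _
    rcases eq_or_ne i j with rfl | h
    · simp
    · rw [if_neg h]
      exact pairQuadNonneg _ _ _ _ _ (hpair i j).1 (hpair i j).2
  have hpsd : Xb.PosSemidef := by
    refine Matrix.posSemidef_iff_dotProduct_mulVec.mpr ⟨hherm, fun x => ?_⟩
    simpa using hkey x
  -- Frobenius part
  have hsum1 : ∑ i, ∑ j, X i j ^ 2 = 1 := by
    have h0 : (0 : ℝ) ≤ ∑ i, ∑ j, X i j ^ 2 :=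
      Finset.sum_nonneg fun i _ => Finset.sum_nonneg fun j _ => sq_nonneg _
    have h1 : Real.sqrt (∑ i, ∑ j, X i j ^ 2) = 1 := hnorm
    nlinarith [Real.sq_sqrt h0, h1]
  have hD : ∀ i j, (X - ((n : ℝ) - 1) • Xb) i j
      = if i = j then (2 * X i i - X.trace) / n else ((n : ℝ) - 2) / n * X i j := by
    intro i j
    have : (X - ((n : ℝ) - 1) • Xb) i j = X i j - ((n : ℝ) - 1) * Xb i j := by
      simp [Matrix.sub_apply]
    rw [this, hXb]
    rcases eq_or_ne i j with rfl | h
    · rw [if_pos rfl, if_pos rfl]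
      field_simp
      ring
    · rw [if_neg h, if_neg h]
      field_simp
  have hfb : frob (X - ((n : ℝ) - 1) • Xb) ≤ ((n : ℝ) - 2) / n := by
    have hsplit : ∀ i j, ((X - ((n : ℝ) - 1) • Xb) i j) ^ 2
        = (((n : ℝ) - 2) / n) ^ 2 * X i j ^ 2
          + (if i = j then ((2 * X i i - X.trace) / n) ^ 2
              - (((n : ℝ) - 2) / n) ^ 2 * X i i ^ 2 else 0) := by
      intro i j
      rcases eq_or_ne i j with rfl | h
      · rw [hD, if_pos rfl, if_pos rfl]; ring
      · rw [hD, if_neg h, if_neg h]; ring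
    have hsum : ∑ i, ∑ j, ((X - ((n : ℝ) - 1) • Xb) i j) ^ 2
        = (((n : ℝ) - 2) / n) ^ 2
          + ∑ i, (((2 * X i i - X.trace) / n) ^ 2 - (((n : ℝ) - 2) / n) ^ 2 * X i i ^ 2) := by
      simp_rw [hsplit, Finset.sum_add_distrib, Finset.sum_ite_eq, Finset.mem_univ, if_true,
        ← Finset.mul_sum]
      rw [hsum1, mul_one]
    have hCS : (∑ i, X i i) ^ 2 ≤ (n : ℝ) * ∑ i, X i i ^ 2 := by
      have := sq_sum_le_card_mul_sum_sq (s := (Finset.univ : Finset (Fin n)))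
        (f := fun i => X i i)
      simpa using this
    have hdiag : ∑ i, (((2 * X i i - X.trace) / n) ^ 2
        - (((n : ℝ) - 2) / n) ^ 2 * X i i ^ 2) ≤ 0 := by
      have expand : ∀ i : Fin n, ((2 * X i i - X.trace) / n) ^ 2
          - (((n : ℝ) - 2) / n) ^ 2 * X i i ^ 2
          = (1 / n ^ 2) * ((4 - ((n : ℝ) - 2) ^ 2) * X i i ^ 2
              - 4 * X.trace * X i i + X.trace ^ 2) := by
        intro i
        field_simp
        ring
      simp_rw [expand, ← Finset.mul_sum]
      have hsum2 : ∑ i, ((4 - ((n : ℝ) - 2) ^ 2) * X i i ^ 2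
          - 4 * X.trace * X i i + X.trace ^ 2)
          = (4 - ((n : ℝ) - 2) ^ 2) * (∑ i, X i i ^ 2)
            - 4 * X.trace * (∑ i, X i i) + (n : ℝ) * X.trace ^ 2 := by
        simp_rw [Finset.sum_add_distrib, Finset.sum_sub_distrib, ← Finset.mul_sum,
          Finset.sum_const, Finset.card_univ, Fintype.card_fin, nsmul_eq_mul]
      have hE : (4 - ((n : ℝ) - 2) ^ 2) * (∑ i, X i i ^ 2)
          - 4 * X.trace * (∑ i, X i i) + (n : ℝ) * X.trace ^ 2 ≤ 0 := by
        rw [htr]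
        nlinarith [mul_le_mul_of_nonneg_left hCS (by linarith : (0:ℝ) ≤ (n:ℝ) - 4)]
      have hpos : (0:ℝ) ≤ 1 / (n:ℝ) ^ 2 := by positivity
      rw [hsum2]
      exact mul_nonpos_of_nonneg_of_nonpos hpos hE
    have hle : ∑ i, ∑ j, ((X - ((n : ℝ) - 1) • Xb) i j) ^ 2 ≤ (((n : ℝ) - 2) / n) ^ 2 := by
      rw [hsum]; linarith
    have h2n : (0 : ℝ) ≤ ((n : ℝ) - 2) / n := div_nonneg (by linarith) (by linarith)
    calc frob (X - ((n : ℝ) - 1) • Xb)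
        ≤ Real.sqrt ((((n : ℝ) - 2) / n) ^ 2) := Real.sqrt_le_sqrt hle
      _ = ((n : ℝ) - 2) / n := Real.sqrt_sq h2n
  refine ⟨hpsd, hfb, ?_⟩
  have hYpsd : (((n : ℝ) - 1) • Xb).PosSemidef := by
    refine Matrix.posSemidef_iff_dotProduct_mulVec.mpr ⟨?_, ?_⟩
    · have : (((n : ℝ) - 1) • Xb)ᴴ = ((n : ℝ) - 1) • Xb := by
        ext i j
        simp [Matrix.conjTranspose_apply, hXbsymm]
      exact this
    · intro x
      have : (star x) ⬝ᵥ (((n : ℝ) - 1) • Xb) *ᵥ x = ((n : ℝ) - 1) * (x ⬝ᵥ Xb *ᵥ x) := by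
        simp [Matrix.smul_mulVec, dotProduct_smul]
      rw [this]
      exact mul_nonneg (by linarith) (hkey x)
  have hmem : frob (X - ((n : ℝ) - 1) • Xb)
      ∈ {d : ℝ | ∃ Y : Matrix (Fin n) (Fin n) ℝ, Y.PosSemidef ∧ d = frob (X - Y)} :=
    ⟨((n : ℝ) - 1) • Xb, hYpsd, rfl⟩
  have hbdd : BddBelow {d : ℝ | ∃ Y : Matrix (Fin n) (Fin n) ℝ, Y.PosSemidef ∧ d = frob (X - Y)} := by
    refine ⟨0, fun d hd => ?_⟩
    obtain ⟨Y, _, hdY⟩ := hd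
    rw [hdY]
    exact Real.sqrt_nonneg _
  exact le_trans (csInf_le hbdd hmem) hfb
end
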